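/- arXiv:2204.01410 — 9 statements merged into one kernel-verified Lean document; each statement's English description precedes it below -/
import Mathlib

section
/- Assume the action space A and the noise space Ξ are compact metric spaces, and for each cluster k ∈ {1,…,K} the map P^k : A × Ξ → ℝ^{N×N} is continuous with values in row-stochastic matrices. Assume there is L ∈ ℕ such that for every a_{1:L} ∈ A^L, every ξ_{1:L} ∈ Ξ^L and every k, the product Q^k_L(a_{1:L},ξ_{1:L}) = P^k(a_1,ξ_1)···P^k(a_L,ξ_L) has all entries strictly positive. Let D^k_L be the convex hull of { μ Q^k_L(a_{1:L},ξ_{1:L}) : a_{1:L} ∈ A^L, μ ∈ Δ_N, ξ_{1:L} ∈ Ξ^L } and D_L = Π_{k=1}^K D^k_L. Then D_L is compact, each D^k_L is contained in the relative interior of Δ_N (i.e., all its points have strictly positive entries), and for every μ_0 ∈ (Δ_N)^K, every t ≥ L, every a_{1:t} ∈ A^t and ξ_{1:t} ∈ Ξ^t, the state μ_t defined componentwise by μ^k_s = μ^k_{s−1} P^k(a_s, ξ_s) for s = 1,…,t satisfies μ_t ∈ D_L. -/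
/-!
Row-stochastic matrices form a monoid acting on the simplex, so the trajectory stays in the
simplex and `μ_t = μ_{t-L} Q_L(a_{t-L+1:t}, ξ_{t-L+1:t})` lies in the generating set of `D^k_L`.
A simplex vector times an entrywise positive matrix is entrywise positive, and the positive
part of the simplex is convex, so it contains the whole hull `D^k_L`. The generating set is a
continuous image of a compact space, and by Carathéodory the convex hull of a compact set in
`ℝ^N` is the continuous image of `Δ_{N+1} × s^{N+1}`, hence compact.
-/

open Matrix

section Caratheodory

variable {𝕜 E : Type*} [Field 𝕜] [LinearOrder 𝕜] [IsStrictOrderedRing 𝕜]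
  [AddCommGroup E] [Module 𝕜 E] [FiniteDimensional 𝕜 E]

theorem convexHull_eq_image_stdSimplex_fin_finrank_succ (s : Set E) :
    convexHull 𝕜 s =
      (fun p : (Fin (Module.finrank 𝕜 E + 1) → 𝕜) × (Fin (Module.finrank 𝕜 E + 1) → E) =>
        ∑ i, p.1 i • p.2 i) '' (stdSimplex 𝕜 _ ×ˢ Set.univ.pi fun _ => s) := by
  refine subset_antisymm ?_ ?_
  · intro x hx
    obtain ⟨ι, _, z, w, hzs, hz_indep, hw_pos, hw_sum, rfl⟩ :=
      eq_pos_convex_span_of_mem_convexHull hx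
    obtain ⟨i₀⟩ : Nonempty ι := by
      by_contra hempty
      simp [not_nonempty_iff.mp hempty] at hw_sum
    have hcard : Fintype.card ι ≤ Fintype.card (Fin (Module.finrank 𝕜 E + 1)) := by
      simpa using hz_indep.card_le_finrank_succ.trans
        (Nat.succ_le_succ (Submodule.finrank_le _))
    obtain ⟨e⟩ := Function.Embedding.nonempty_of_card_le hcard
    -- pad the Carathéodory combination with zero weights outside the range of `e`
    set w' := Function.extend e w 0
    set z' := Function.extend e z fun _ => z i₀
    have hw' : ∀ j ∉ Set.range e, w' j = 0 := fun j hj => Function.extend_apply' _ _ _ hj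
    refine ⟨(w', z'), ⟨⟨fun j => ?_, ?_⟩, fun j _ => ?_⟩, ?_⟩
    · by_cases hj : j ∈ Set.range e
      · obtain ⟨i, rfl⟩ := hj
        simpa only [w', e.injective.extend_apply] using (hw_pos i).le
      · exact (hw' j hj).ge
    · exact (Fintype.sum_of_injective e e.injective w w' hw'
        fun i => (e.injective.extend_apply _ _ _).symm).symm.trans hw_sum
    · by_cases hj : j ∈ Set.range e
      · obtain ⟨i, rfl⟩ := hj
        simpa only [z', e.injective.extend_apply] using hzs (Set.mem_range_self i)
      · simpa only [z', Function.extend_apply' _ _ _ hj] using hzs (Set.mem_range_self i₀)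
    · refine (Fintype.sum_of_injective e e.injective (fun i => w i • z i) _
        (fun j hj => ?_) fun i => ?_).symm
      · simp only [hw' j hj, zero_smul]
      · simp only [w', z', e.injective.extend_apply]
  · rintro _ ⟨⟨w, z⟩, ⟨⟨hw_nonneg, hw_sum⟩, hz⟩, rfl⟩
    exact (convex_convexHull 𝕜 s).sum_mem (fun i _ => hw_nonneg i) hw_sum
      fun i _ => subset_convexHull 𝕜 s (hz i (Set.mem_univ i))

end Caratheodory

section Compact

variable (𝕜 : Type*) {E : Type*} [Field 𝕜] [LinearOrder 𝕜] [IsStrictOrderedRing 𝕜]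
  [TopologicalSpace 𝕜] [OrderClosedTopology 𝕜] [CompactIccSpace 𝕜] [ContinuousAdd 𝕜]
  [AddCommGroup E] [Module 𝕜 E] [FiniteDimensional 𝕜 E]
  [TopologicalSpace E] [ContinuousAdd E] [ContinuousSMul 𝕜 E]

theorem IsCompact.convexHull {s : Set E} (hs : IsCompact s) : IsCompact (convexHull 𝕜 s) := by
  rw [convexHull_eq_image_stdSimplex_fin_finrank_succ]
  exact ((isCompact_stdSimplex 𝕜 _).prod (isCompact_univ_pi fun _ => hs)).image (by fun_prop)

end Compact

theorem continuous_list_prod_ofFn {X M : Type*} [TopologicalSpace X] [TopologicalSpace M]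
    [Monoid M] [ContinuousMul M] {n : ℕ} {f : Fin n → X → M} (hf : ∀ i, Continuous (f i)) :
    Continuous fun x => (List.ofFn fun i => f i x).prod := by
  simp only [List.ofFn_eq_map]
  exact continuous_list_prod _ fun i _ => hf i

theorem eq_vecMul_list_prod_ofFn_of_succ {R n : Type*} [Semiring R] [Fintype n] [DecidableEq n]
    {v : ℕ → n → R} {M : ℕ → Matrix n n R} (hv : ∀ s, v (s + 1) = v s ᵥ* M (s + 1))
    (s m : ℕ) : v (s + m) = v s ᵥ* (List.ofFn fun l : Fin m => M (s + l + 1)).prod := by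
  induction m with
  | zero => simp
  | succ m ih =>
    rw [List.ofFn_succ', List.prod_concat, ← vecMul_vecMul]
    simp only [Fin.val_castSucc, Fin.val_last]
    rw [← ih, ← add_assoc, hv]

section Stochastic

variable {R n : Type*} [Fintype n]

theorem mem_rowStochastic_iff_forall_mem_stdSimplex [DecidableEq n] [Semiring R]
    [PartialOrder R] [IsOrderedRing R] {M : Matrix n n R} :
    M ∈ rowStochastic R n ↔ ∀ i, M i ∈ stdSimplex R n := by
  simp only [mem_rowStochastic_iff_sum, stdSimplex, Set.mem_ofPred_eq]
  exact ⟨fun h i => ⟨h.1 i, h.2 i⟩, fun h => ⟨fun i => (h i).1, fun i => (h i).2⟩⟩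

theorem vecMul_mem_stdSimplex [DecidableEq n] [Semiring R] [PartialOrder R] [IsOrderedRing R]
    {x : n → R} {M : Matrix n n R} (hx : x ∈ stdSimplex R n) (hM : M ∈ rowStochastic R n) :
    x ᵥ* M ∈ stdSimplex R n := by
  refine ⟨nonneg_vecMul_of_mem_rowStochastic hM hx.1, ?_⟩
  rw [← dotProduct_one]
  exact vecMul_dotProduct_one_eq_one_rowStochastic hM (by rw [dotProduct_one, hx.2])

theorem list_prod_ofFn_mem_rowStochastic [DecidableEq n] [Semiring R] [PartialOrder R]
    [IsOrderedRing R]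
    {m : ℕ} {f : Fin m → Matrix n n R} (hf : ∀ l, f l ∈ rowStochastic R n) :
    (List.ofFn f).prod ∈ rowStochastic R n :=
  Submonoid.list_prod_mem _ fun _ hM => (List.mem_ofFn.mp hM).elim fun l hl => hl ▸ hf l

theorem vecMul_pos_of_mem_stdSimplex [Semiring R] [LinearOrder R] [IsStrictOrderedRing R]
    {x : n → R} {M : Matrix n n R} (hx : x ∈ stdSimplex R n) (hM : ∀ i j, 0 < M i j) (j : n) :
    0 < (x ᵥ* M) j := by
  obtain ⟨i, -, hi⟩ : ∃ i ∈ Finset.univ, (0 : n → R) i < x i :=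
    Finset.exists_lt_of_sum_lt (by simp [hx.2])
  exact Finset.sum_pos' (fun i _ => mul_nonneg (hx.1 i) (hM i j).le)
    ⟨i, Finset.mem_univ i, mul_pos hi (hM i j)⟩

end Stochastic

theorem convex_setOf_mem_stdSimplex_forall_pos {𝕜 ι : Type*} [Field 𝕜] [LinearOrder 𝕜]
    [IsStrictOrderedRing 𝕜] [Fintype ι] :
    Convex 𝕜 {x : ι → 𝕜 | x ∈ stdSimplex 𝕜 ι ∧ ∀ i, 0 < x i} := by
  have hpos : {x : ι → 𝕜 | ∀ i, 0 < x i} = Set.univ.pi fun _ => Set.Ioi 0 := by ext; simp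
  exact (convex_stdSimplex 𝕜 ι).inter (t := {x | ∀ i, 0 < x i})
    (hpos ▸ convex_pi fun _ _ => convex_Ioi 0)

theorem isCompact_setOf_vecMul_stdSimplex {X n : Type*} [TopologicalSpace X] [CompactSpace X]
    [Fintype n] {Q : X → Matrix n n ℝ} (hQ : Continuous Q) :
    IsCompact {ν | ∃ x μ, μ ∈ stdSimplex ℝ n ∧ ν = μ ᵥ* Q x} := by
  have himage : {ν | ∃ x μ, μ ∈ stdSimplex ℝ n ∧ ν = μ ᵥ* Q x} =
      (fun p : X × (n → ℝ) => p.2 ᵥ* Q p.1) '' (Set.univ ×ˢ stdSimplex ℝ n) := by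
    ext ν
    simp [eq_comm]
  rw [himage]
  exact (isCompact_univ.prod (isCompact_stdSimplex ℝ n)).image (by fun_prop)

/-- Lemma on the effective domain `D_L`.
Under continuity (A1), row-stochasticity, and the primitivity assumption (A2)
that every product of `L` transition matrices is entrywise positive, the set
`D_L` (product over clusters of convex hulls of images of the simplex) is
compact, each factor is contained in the relative interior of the simplex,
and the controlled trajectory lies in `D_L` after `L` steps. -/
theorem effective_domain_compact_and_invariant
    {A Ξ : Type*} [MetricSpace A] [CompactSpace A] [MetricSpace Ξ] [CompactSpace Ξ]
    (K N L : ℕ)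
    (P : Fin K → A → Ξ → Matrix (Fin N) (Fin N) ℝ)
    (hPcont : ∀ k, Continuous fun p : A × Ξ => P k p.1 p.2)
    (hPstoch : ∀ k a ξ i, (fun j => P k a ξ i j) ∈ stdSimplex ℝ (Fin N))
    (hPpos : ∀ (a : Fin L → A) (ξ : Fin L → Ξ) (k : Fin K) (i j : Fin N),
      0 < (List.ofFn fun l => P k (a l) (ξ l)).prod i j)
    (DkL : Fin K → Set (Fin N → ℝ))
    (hDkL : ∀ k, DkL k = convexHull ℝ
      {ν | ∃ (a : Fin L → A) (ξ : Fin L → Ξ) (μ : Fin N → ℝ),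
        μ ∈ stdSimplex ℝ (Fin N) ∧
        ν = Matrix.vecMul μ (List.ofFn fun l => P k (a l) (ξ l)).prod})
    (DL : Set (Fin K → Fin N → ℝ))
    (hDL : DL = {μ | ∀ k, μ k ∈ DkL k}) :
    IsCompact DL ∧
    (∀ k, ∀ x ∈ DkL k, x ∈ stdSimplex ℝ (Fin N) ∧ ∀ i, 0 < x i) ∧
    (∀ (μ : ℕ → Fin K → Fin N → ℝ) (a : ℕ → A) (ξ : ℕ → Ξ),
      (∀ k, μ 0 k ∈ stdSimplex ℝ (Fin N)) →
      (∀ s k, μ (s + 1) k = Matrix.vecMul (μ s k) (P k (a (s + 1)) (ξ (s + 1)))) →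
      ∀ t, L ≤ t → μ t ∈ DL) := by
  have hP : ∀ k a ξ, P k a ξ ∈ rowStochastic ℝ (Fin N) := fun k a ξ =>
    mem_rowStochastic_iff_forall_mem_stdSimplex.mpr (hPstoch k a ξ)
  have hPprod : ∀ k {m} (a : Fin m → A) (ξ : Fin m → Ξ),
      (List.ofFn fun l => P k (a l) (ξ l)).prod ∈ rowStochastic ℝ (Fin N) := fun k _ _ _ =>
    list_prod_ofFn_mem_rowStochastic fun _ => hP k _ _
  refine ⟨?_, fun k x hx => ?_, fun μ a ξ hμ₀ hμ t ht => ?_⟩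
  · rw [hDL, show {μ | ∀ k, μ k ∈ DkL k} = Set.univ.pi DkL by ext; simp]
    refine isCompact_univ_pi fun k => hDkL k ▸ IsCompact.convexHull ℝ ?_
    simpa only [Prod.exists] using isCompact_setOf_vecMul_stdSimplex
      (Q := fun x : (Fin L → A) × (Fin L → Ξ) => (List.ofFn fun l => P k (x.1 l) (x.2 l)).prod)
      (continuous_list_prod_ofFn fun l => (hPcont k).comp
        (show Continuous fun x : (Fin L → A) × (Fin L → Ξ) => (x.1 l, x.2 l) by fun_prop))
  · rw [hDkL] at hx
    refine convexHull_min (t := {x | x ∈ stdSimplex ℝ (Fin N) ∧ ∀ i, 0 < x i}) ?_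
      convex_setOf_mem_stdSimplex_forall_pos hx
    rintro _ ⟨a, ξ, μ, hμ, rfl⟩
    exact ⟨vecMul_mem_stdSimplex hμ (hPprod k a ξ), vecMul_pos_of_mem_stdSimplex hμ (hPpos a ξ k)⟩
  · obtain ⟨s, rfl⟩ := Nat.exists_eq_add_of_le' ht
    rw [hDL]
    intro k
    have hunroll := eq_vecMul_list_prod_ofFn_of_succ (v := fun s => μ s k)
      (M := fun s => P k (a s) (ξ s)) fun s => hμ s k
    have hμs : μ s k ∈ stdSimplex ℝ (Fin N) := by
      rw [← zero_add s, hunroll 0 s]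
      exact vecMul_mem_stdSimplex (hμ₀ k) (hPprod k _ _)
    rw [hDkL]
    exact subset_convexHull ℝ _ ⟨_, _, μ s k, hμs, hunroll s L⟩
end

section
/- Let n ≥ 1, let u = (1/n,…,1/n) ∈ Δ_n be the barycenter of the simplex, let x, y ∈ Δ_n have all entries strictly positive, and let d > 0 satisfy d_H(x,y) ≤ d, d_H(x,u) ≤ d and d_H(y,u) ≤ d. Then n·‖x − y‖_∞ ≤ d_H(x,y)·Υ(d), where Υ(d) = (1/d)·e^d·(e^d − 1). -/
/-!
On the simplex the coordinatewise log-ratios `t i = log (x i / y i)` change sign, so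
`|t i| ≤ d_H(x,y)`. Writing `x i - y i = y i (exp (t i) - 1)`, the factor `y i` is at most
`e^d / n` because `d_H(y,u) ≤ d` and some `y j ≤ 1/n`, while convexity of `exp` on `[0,d]`
gives `|exp t - 1| ≤ (|t| / d) (e^d - 1)`.
-/

/-- Hilbert's projective metric on positive vectors:
`d_H(u,v) = max_{i,j} log((u i / v i) * (v j / u j))`. -/
noncomputable def dH {n : ℕ} (u v : Fin n → ℝ) : ℝ :=
  ⨆ p : Fin n × Fin n, Real.log (u p.1 / v p.1 * (v p.2 / u p.2))

open Real Finset

section HilbertMetric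

variable {n : ℕ}

lemma log_le_dH (u v : Fin n → ℝ) (i j : Fin n) :
    log (u i / v i * (v j / u j)) ≤ dH u v :=
  le_ciSup (f := fun p : Fin n × Fin n => log (u p.1 / v p.1 * (v p.2 / u p.2)))
    (Set.finite_range _).bddAbove (i, j)

lemma dH_nonneg (u v : Fin n → ℝ) : 0 ≤ dH u v := by
  cases isEmpty_or_nonempty (Fin n) with
  | inl _ => simp [dH]
  | inr h =>
    obtain ⟨i⟩ := h
    refine le_trans (le_of_eq ?_) (log_le_dH u v i i)
    rw [div_mul_div_comm, mul_comm (v i)]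
    rcases eq_or_ne (u i * v i) 0 with h | h <;> simp [h]

variable {u v : Fin n → ℝ}

lemma log_sub_log_le_dH (hu : ∀ i, 0 < u i) (hv : ∀ i, 0 < v i) (i j : Fin n) :
    log (u i) - log (v i) - (log (u j) - log (v j)) ≤ dH u v := by
  have h := log_le_dH u v i j
  rw [log_mul (div_pos (hu i) (hv i)).ne' (div_pos (hv j) (hu j)).ne',
    log_div (hu i).ne' (hv i).ne', log_div (hv j).ne' (hu j).ne'] at h
  linarith

lemma abs_log_sub_log_le_dH (hu : ∀ i, 0 < u i) (hv : ∀ i, 0 < v i)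
    (hsum : ∑ i, u i = ∑ i, v i) (i : Fin n) :
    |log (u i) - log (v i)| ≤ dH u v := by
  have hne : (univ : Finset (Fin n)).Nonempty := ⟨i, mem_univ i⟩
  obtain ⟨j, -, hj⟩ := exists_le_of_sum_le hne hsum.le
  obtain ⟨k, -, hk⟩ := exists_le_of_sum_le hne hsum.ge
  have hj' := log_le_log (hu j) hj
  have hk' := log_le_log (hv k) hk
  have := log_sub_log_le_dH hu hv i j
  have := log_sub_log_le_dH hu hv k i
  rw [abs_le]
  constructor <;> linarith

lemma card_mul_le_exp_dH_barycenter (hv : v ∈ stdSimplex ℝ (Fin n)) (hvpos : ∀ i, 0 < v i)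
    (i : Fin n) : n * v i ≤ exp (dH v fun _ => 1 / (n : ℝ)) := by
  have hn : (0 : ℝ) < n := by exact_mod_cast Fin.pos i
  obtain ⟨j, -, hj⟩ := exists_le_of_sum_le (s := univ) (f := v) (g := fun _ => 1 / (n : ℝ))
    ⟨i, mem_univ i⟩ (by simp [hv.2, hn.ne'])
  have hlog := log_sub_log_le_dH (v := fun _ => 1 / (n : ℝ)) hvpos (fun _ => by positivity) i j
  beta_reduce at hlog
  have hvi : v i ≤ exp (dH v fun _ => 1 / (n : ℝ)) * v j := by
    rw [← exp_log (hvpos i), ← exp_log (hvpos j), ← exp_add]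
    exact exp_le_exp.2 (by linarith)
  calc (n : ℝ) * v i ≤ n * (exp (dH v fun _ => 1 / (n : ℝ)) * (1 / n)) := by
        gcongr
        exact hvi.trans (by gcongr)
    _ = _ := by field_simp

end HilbertMetric

lemma abs_exp_sub_one_le {t d : ℝ} (hd : 0 < d) (htd : |t| ≤ d) :
    |exp t - 1| ≤ |t| / d * (exp d - 1) := by
  rcases le_or_gt 0 t with ht | ht
  · have hconv := convexOn_exp.2 (Set.mem_univ 0) (Set.mem_univ d)
      (sub_nonneg.2 ((div_le_one hd).2 htd)) (div_nonneg (abs_nonneg t) hd.le) (by ring)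
    simp only [smul_eq_mul, mul_zero, zero_add, exp_zero, mul_one,
      div_mul_cancel₀ _ hd.ne'] at hconv
    rw [abs_of_nonneg ht] at hconv ⊢
    rw [abs_of_nonneg (by linarith [one_le_exp ht])]
    linarith
  · -- for `t < 0` no convexity is needed: `1 - e^t ≤ -t` and `d ≤ e^d - 1`
    have h1 : 1 ≤ (exp d - 1) / d := (one_le_div hd).2 (by linarith [add_one_le_exp d])
    rw [abs_of_neg ht, abs_of_neg (by linarith [exp_lt_one_iff.2 ht]), div_mul_eq_mul_div,
      mul_div_assoc]
    nlinarith [add_one_le_exp t]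

lemma card_mul_abs_sub_le {n : ℕ} {x y : Fin n → ℝ} (hx : x ∈ stdSimplex ℝ (Fin n))
    (hy : y ∈ stdSimplex ℝ (Fin n)) (hxpos : ∀ i, 0 < x i) (hypos : ∀ i, 0 < y i)
    {d : ℝ} (hd : 0 < d) (hxy : dH x y ≤ d) (hyu : dH y (fun _ => 1 / (n : ℝ)) ≤ d)
    (i : Fin n) : n * |x i - y i| ≤ dH x y * (1 / d * exp d * (exp d - 1)) := by
  set t := log (x i) - log (y i)
  have ht : |t| ≤ dH x y := abs_log_sub_log_le_dH hxpos hypos (hx.2.trans hy.2.symm) i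
  have hxi : x i - y i = y i * (exp t - 1) := by
    rw [exp_sub, exp_log (hxpos i), exp_log (hypos i), mul_sub, mul_div_cancel₀ _ (hypos i).ne',
      mul_one]
  have hny : n * y i ≤ exp d := (card_mul_le_exp_dH_barycenter hy hypos i).trans (exp_le_exp.2 hyu)
  calc n * |x i - y i| = n * y i * |exp t - 1| := by
        rw [hxi, abs_mul, abs_of_pos (hypos i), mul_assoc]
    _ ≤ exp d * (|t| / d * (exp d - 1)) :=
        mul_le_mul hny (abs_exp_sub_one_le hd (ht.trans hxy)) (abs_nonneg _) (exp_pos d).le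
    _ ≤ exp d * (dH x y / d * (exp d - 1)) := by
        have := sub_nonneg.2 (one_le_exp hd.le)
        gcongr
    _ = dH x y * (1 / d * exp d * (exp d - 1)) := by ring

theorem metric_comparison_general (n : ℕ) (x y : Fin n → ℝ)
    (hx : x ∈ stdSimplex ℝ (Fin n)) (hy : y ∈ stdSimplex ℝ (Fin n))
    (hxpos : ∀ i, 0 < x i) (hypos : ∀ i, 0 < y i)
    (u : Fin n → ℝ) (hu : u = fun _ => 1 / (n : ℝ))
    (d : ℝ) (hd : 0 < d)
    (hxy : dH x y ≤ d) (hyu : dH y u ≤ d) :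
    (n : ℝ) * ‖x - y‖ ≤ dH x y * (1 / d * Real.exp d * (Real.exp d - 1)) := by
  subst hu
  have hΥ : 0 ≤ 1 / d * exp d * (exp d - 1) := by
    have := sub_nonneg.2 (one_le_exp hd.le)
    positivity
  calc (n : ℝ) * ‖x - y‖ = ‖(n : ℝ) • (x - y)‖ := by rw [norm_smul, Real.norm_natCast]
    _ ≤ dH x y * (1 / d * exp d * (exp d - 1)) := by
        refine (pi_norm_le_iff_of_nonneg (mul_nonneg (dH_nonneg x y) hΥ)).2 fun i => ?_
        rw [Pi.smul_apply, smul_eq_mul, norm_mul, Real.norm_natCast, Pi.sub_apply,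
          Real.norm_eq_abs]
        exact card_mul_abs_sub_le hx hy hxpos hypos hd hxy hyu i

/-- metric comparison lemma, Lemma 2 of the paper.
If `x, y` are positive points of the simplex `Δ_n`, `u` is the barycenter,
and the pairwise Hilbert distances between `x`, `y`, `u` are at most `d > 0`,
then `n * ‖x - y‖_∞ ≤ d_H(x,y) * Υ(d)` with `Υ(d) = (1/d) e^d (e^d - 1)`.
(The norm on `Fin n → ℝ` is the sup norm.) -/
theorem metric_comparison (n : ℕ) (hn : 1 ≤ n) (x y : Fin n → ℝ)
    (hx : x ∈ stdSimplex ℝ (Fin n)) (hy : y ∈ stdSimplex ℝ (Fin n))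
    (hxpos : ∀ i, 0 < x i) (hypos : ∀ i, 0 < y i)
    (u : Fin n → ℝ) (hu : u = fun _ => 1 / (n : ℝ))
    (d : ℝ) (hd : 0 < d)
    (hxy : dH x y ≤ d) (hxu : dH x u ≤ d) (hyu : dH y u ≤ d) :
    (n : ℝ) * ‖x - y‖ ≤ dH x y * (1 / d * Real.exp d * (Real.exp d - 1)) :=
  metric_comparison_general n x y hx hy hxpos hypos u hu d hd hxy hyu
end

section
/- Fix a_0 ∈ (0,1/2), a_1 = 1−a_0, and k ∈ {0,1}. A linear function h(μ_1,μ_3) = α·μ_1 + β·μ_3 and a constant g ∈ ℝ satisfy the Kolmogorov (fixed-policy) eigen-equation h(μ_1,μ_3) + g = (1−a_k)²(1−μ_3) + a_k²(1−μ_1) + h((1−a_k)(1−μ_3), a_k(1−μ_1)) for all (μ_1,μ_3) ∈ Δ₃^≤ if and only if g = (a_k³ + (1−a_k)³)/(1 − a_k(1−a_k)), α = (a_k(1−a_k)² − a_k²)/(1 − a_k(1−a_k)), and β = ((1−a_k)a_k² − (1−a_k)²)/(1 − a_k(1−a_k)). In particular the value of g is the same for k = 0 and k = 1. -/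
/-!
Both sides of the eigen-equation are affine in `(μ₁, μ₃)`, and an affine function vanishes on the
triangle `Δ₃^≤` iff it vanishes at its three vertices. The equation is therefore equivalent to three
linear equations in `g, α, β`; the two for `α, β` form a system with determinant
`1 - a (1 - a) = (a - 1/2)² + 3/4 > 0`, and Cramer's rule gives the formulas.
-/

theorem affine_eq_zero_on_triangle_iff (c p q : ℝ) :
    (∀ x y : ℝ, 0 ≤ x → 0 ≤ y → x + y ≤ 1 → c + p * x + q * y = 0) ↔
      c = 0 ∧ p = 0 ∧ q = 0 := by
  constructor
  · intro h
    have h00 := h 0 0 le_rfl le_rfl (by norm_num)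
    have h10 := h 1 0 zero_le_one le_rfl (by norm_num)
    have h01 := h 0 1 le_rfl zero_le_one (by norm_num)
    refine ⟨?_, ?_, ?_⟩ <;> linarith
  · rintro ⟨rfl, rfl, rfl⟩ x y - - -
    ring

theorem one_sub_mul_one_sub_self_pos (a : ℝ) : 0 < 1 - a * (1 - a) := by
  nlinarith [sq_nonneg (a - 1 / 2)]

theorem kolmogorov_eq_on_triangle_iff (a g α β : ℝ) :
    (∀ μ1 μ3 : ℝ, 0 ≤ μ1 → 0 ≤ μ3 → μ1 + μ3 ≤ 1 →
        α * μ1 + β * μ3 + g =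
          (1 - a) ^ 2 * (1 - μ3) + a ^ 2 * (1 - μ1) +
            (α * ((1 - a) * (1 - μ3)) + β * (a * (1 - μ1)))) ↔
      g - (1 - a) ^ 2 - a ^ 2 - α * (1 - a) - β * a = 0 ∧
        α + a ^ 2 + β * a = 0 ∧ β + (1 - a) ^ 2 + α * (1 - a) = 0 := by
  rw [← affine_eq_zero_on_triangle_iff]
  refine forall₂_congr fun μ1 μ3 => imp_congr_right fun _ => imp_congr_right fun _ =>
    imp_congr_right fun _ => ⟨fun h => ?_, fun h => ?_⟩ <;> linear_combination h

theorem kolmogorov_linear_system_iff (a g α β : ℝ) :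
    (g - (1 - a) ^ 2 - a ^ 2 - α * (1 - a) - β * a = 0 ∧
        α + a ^ 2 + β * a = 0 ∧ β + (1 - a) ^ 2 + α * (1 - a) = 0) ↔
      (g = (a ^ 3 + (1 - a) ^ 3) / (1 - a * (1 - a)) ∧
        α = (a * (1 - a) ^ 2 - a ^ 2) / (1 - a * (1 - a)) ∧
        β = ((1 - a) * a ^ 2 - (1 - a) ^ 2) / (1 - a * (1 - a))) := by
  have hD := (one_sub_mul_one_sub_self_pos a).ne'
  constructor
  · rintro ⟨hg, hα, hβ⟩
    refine ⟨?_, ?_, ?_⟩ <;> rw [eq_div_iff hD]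
    · linear_combination (1 - a * (1 - a)) * hg + (1 - a) ^ 2 * hα + a ^ 2 * hβ
    · linear_combination hα - a * hβ
    · linear_combination hβ - (1 - a) * hα
  · rintro ⟨rfl, rfl, rfl⟩
    refine ⟨?_, ?_, ?_⟩ <;> field_simp <;> ring

theorem bias_eq_of_one_sub (a : ℝ) :
    (a ^ 3 + (1 - a) ^ 3) / (1 - a * (1 - a)) =
      ((1 - a) ^ 3 + (1 - (1 - a)) ^ 3) / (1 - (1 - a) * (1 - (1 - a))) := by
  ring

theorem kolmogorov_bias_characterization_general
    (a0 : ℝ)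
    (a : ℝ) (g α β : ℝ) :
    ((∀ μ1 μ3 : ℝ, 0 ≤ μ1 → 0 ≤ μ3 → μ1 + μ3 ≤ 1 →
        α * μ1 + β * μ3 + g =
          (1 - a) ^ 2 * (1 - μ3) + a ^ 2 * (1 - μ1) +
            (α * ((1 - a) * (1 - μ3)) + β * (a * (1 - μ1)))) ↔
      (g = (a ^ 3 + (1 - a) ^ 3) / (1 - a * (1 - a)) ∧
        α = (a * (1 - a) ^ 2 - a ^ 2) / (1 - a * (1 - a)) ∧
        β = ((1 - a) * a ^ 2 - (1 - a) ^ 2) / (1 - a * (1 - a))))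
    ∧ (a0 ^ 3 + (1 - a0) ^ 3) / (1 - a0 * (1 - a0)) =
        ((1 - a0) ^ 3 + (1 - (1 - a0)) ^ 3) / (1 - (1 - a0) * (1 - (1 - a0))) :=
  ⟨(kolmogorov_eq_on_triangle_iff a g α β).trans (kolmogorov_linear_system_iff a g α β),
    bias_eq_of_one_sub a0⟩

/-- bias of the Kolmogorov operator in the counter-example.
With `a ∈ {a₀, 1 - a₀}` for `a₀ ∈ (0,1/2)`, a linear function
`h(μ₁,μ₃) = α μ₁ + β μ₃` and a constant `g` satisfy the fixed-policy
eigen-equation on `Δ₃^≤` iff `g`, `α`, `β` are given by the explicit formulas;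
moreover the value of `g` is the same for `a₀` and `a₁ = 1 - a₀`. -/
theorem kolmogorov_bias_characterization
    (a0 : ℝ) (ha0 : a0 ∈ Set.Ioo (0 : ℝ) (1 / 2))
    (a : ℝ) (ha : a = a0 ∨ a = 1 - a0) (g α β : ℝ) :
    ((∀ μ1 μ3 : ℝ, 0 ≤ μ1 → 0 ≤ μ3 → μ1 + μ3 ≤ 1 →
        α * μ1 + β * μ3 + g =
          (1 - a) ^ 2 * (1 - μ3) + a ^ 2 * (1 - μ1) +
            (α * ((1 - a) * (1 - μ3)) + β * (a * (1 - μ1)))) ↔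
      (g = (a ^ 3 + (1 - a) ^ 3) / (1 - a * (1 - a)) ∧
        α = (a * (1 - a) ^ 2 - a ^ 2) / (1 - a * (1 - a)) ∧
        β = ((1 - a) * a ^ 2 - (1 - a) ^ 2) / (1 - a * (1 - a))))
    ∧ (a0 ^ 3 + (1 - a0) ^ 3) / (1 - a0 * (1 - a0)) =
        ((1 - a0) ^ 3 + (1 - (1 - a0)) ^ 3) / (1 - (1 - a0) * (1 - (1 - a0))) :=
  kolmogorov_bias_characterization_general a0 a g α β
end

section
/- Suboptimality gap of steady-state policies: assume A is a compact metric space, for each k ∈ {1,…,K} the map P^k : A → ℝ^{N×N} is continuous with values in row-stochastic matrices having ALL entries strictly positive, θ^k : A → ℝ^N is continuous and bounded, ρ ∈ Δ_K, and r(a,μ) = Σ_k ρ_k⟨θ^k(a), μ^k⟩. Let S = {(a,μ) ∈ A×(Δ_N)^K : μ = μP(a)} (where μP(a) = (μ^1P^1(a),…,μ^KP^K(a))) and ḡ = sup_{(a,μ)∈S} r(a,μ). For any bounded injective map φ : (Δ_N)^K → ℝ^{KN}, define the Lagrangian L^φ(a,μ,λ) = r(a, μP(a)) + ⟨λ, φ(μP(a))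 − φ(μ)⟩ and the dual value g^φ = inf_{λ∈ℝ^{KN}} sup_{(a,μ)∈A×(Δ_N)^K} L^φ(a,μ,λ). Then for every initial state μ_0 ∈ (Δ_N)^K: ḡ ≤ sup_{(a_t)_{t≥1}∈A^ℕ} liminf_{T→∞} (1/T)·Σ_{t=1}^T r(a_t, μ_t) ≤ g^φ, where μ_t = μ_{t−1}P(a_t). -/
/-!
If every entry of the row-stochastic matrix `P` is at least `δ > 0`, then `ν ↦ ν P` shrinks the
`ℓ¹` norm of zero-sum vectors by the factor `1 - N δ < 1`. So under a constant action the
distribution converges geometrically to the unique stationary one, whence the running average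
reward of a constant policy at a steady state `(a, μ)` tends to `r(a, μ)`: this gives `ḡ ≤ g*`.
For `g* ≤ g^φ`, fix `λ`: along any trajectory, `r(a_t, μ_t)` is `L^φ(a_t, μ_{t-1}, λ)` minus the
increment of the bounded sequence `⟨λ, φ(μ_t)⟩`. The increments telescope, so every running
average is at most `sup L^φ(·, ·, λ)` up to an `O(1/T)` error.
-/

open Filter Topology Finset Matrix

section StochasticMatrix

variable {ι : Type*} [Fintype ι]

lemma nonempty_of_mem_stdSimplex {ν : ι → ℝ} (hν : ν ∈ stdSimplex ℝ ι) : Nonempty ι := by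
  by_contra h
  rw [not_nonempty_iff] at h
  simp [stdSimplex_of_isEmpty_index] at hν

lemma dist_le_sum_abs_sub (x y : ι → ℝ) : dist x y ≤ ∑ i, |x i - y i| :=
  (dist_pi_le_iff (by positivity)).2 fun i => (Real.dist_eq _ _).trans_le <|
    single_le_sum (f := fun i => |x i - y i|) (fun _ _ => abs_nonneg _) (mem_univ i)

lemma abs_sum_mul_le_of_mem_stdSimplex {x ν : ι → ℝ} {M : ℝ} (hx : ∀ i, |x i| ≤ M)
    (hν : ν ∈ stdSimplex ℝ ι) : |∑ i, ν i * x i| ≤ M :=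
  calc |∑ i, ν i * x i| ≤ ∑ i, ν i * |x i| := by
        refine (abs_sum_le_sum_abs _ _).trans_eq (sum_congr rfl fun i _ => ?_)
        rw [abs_mul, abs_of_nonneg (hν.1 i)]
    _ ≤ ∑ i, ν i * M := sum_le_sum fun i _ => mul_le_mul_of_nonneg_left (hx i) (hν.1 i)
    _ = M := by rw [← sum_mul, hν.2, one_mul]

variable {P : Matrix ι ι ℝ}

lemma sum_vecMul_of_sum_row_eq_one (hP : ∀ i, ∑ j, P i j = 1) (w : ι → ℝ) :
    ∑ j, (w ᵥ* P) j = ∑ i, w i := by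
  simp only [vecMul, dotProduct]
  rw [sum_comm]
  simp [← mul_sum, hP]

lemma vecMul_mem_stdSimplex_s11 (hP : ∀ i, P i ∈ stdSimplex ℝ ι) {ν : ι → ℝ}
    (hν : ν ∈ stdSimplex ℝ ι) : ν ᵥ* P ∈ stdSimplex ℝ ι :=
  ⟨fun j => sum_nonneg fun i _ => mul_nonneg (hν.1 i) ((hP i).1 j),
    (sum_vecMul_of_sum_row_eq_one (fun i => (hP i).2) ν).trans hν.2⟩

lemma sum_abs_vecMul_le (hP : ∀ i, ∑ j, P i j = 1) {δ : ℝ} (hδ : ∀ i j, δ ≤ P i j)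
    {w : ι → ℝ} (hw : ∑ i, w i = 0) :
    ∑ j, |(w ᵥ* P) j| ≤ (1 - Fintype.card ι * δ) * ∑ i, |w i| := by
  -- since `∑ w = 0`, the common floor `δ` of the entries of `P` cancels out of `w ᵥ* P`
  have hfloor : ∀ j, (w ᵥ* P) j = ∑ i, w i * (P i j - δ) := fun j => by
    simp [vecMul, dotProduct, mul_sub, sum_sub_distrib, ← sum_mul, hw]
  calc ∑ j, |(w ᵥ* P) j| ≤ ∑ j, ∑ i, |w i| * (P i j - δ) := sum_le_sum fun j _ => by
        rw [hfloor]
        refine (abs_sum_le_sum_abs _ _).trans_eq (sum_congr rfl fun i _ => ?_)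
        rw [abs_mul, abs_of_nonneg (sub_nonneg.2 (hδ i j))]
    _ = (1 - Fintype.card ι * δ) * ∑ i, |w i| := by
        rw [sum_comm, mul_sum]
        refine sum_congr rfl fun i _ => ?_
        rw [← mul_sum, sum_sub_distrib, hP, sum_const, card_univ, nsmul_eq_mul, mul_comm]

lemma exists_sum_abs_vecMul_le_of_pos [Nonempty ι] (hP : ∀ i, P i ∈ stdSimplex ℝ ι)
    (hpos : ∀ i j, 0 < P i j) :
    ∃ c, 0 ≤ c ∧ c < 1 ∧
      ∀ w : ι → ℝ, ∑ i, w i = 0 → ∑ j, |(w ᵥ* P) j| ≤ c * ∑ i, |w i| := by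
  obtain ⟨p, -, hp⟩ := exists_min_image univ (fun p : ι × ι => P p.1 p.2) univ_nonempty
  have hcard : Fintype.card ι * P p.1 p.2 ≤ 1 :=
    calc Fintype.card ι * P p.1 p.2 = ∑ _j : ι, P p.1 p.2 := by simp
      _ ≤ ∑ j, P p.1 j := sum_le_sum fun j _ => hp (p.1, j) (mem_univ _)
      _ = 1 := (hP p.1).2
  refine ⟨1 - Fintype.card ι * P p.1 p.2, sub_nonneg.2 hcard,
    sub_lt_self 1 (mul_pos (Nat.cast_pos.2 Fintype.card_pos) (hpos _ _)), fun w hw => ?_⟩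
  exact sum_abs_vecMul_le (fun i => (hP i).2) (fun i j => hp (i, j) (mem_univ _)) hw

variable [DecidableEq ι]

lemma vecMul_pow_mem_stdSimplex (hP : ∀ i, P i ∈ stdSimplex ℝ ι) {ν : ι → ℝ}
    (hν : ν ∈ stdSimplex ℝ ι) (t : ℕ) : ν ᵥ* P ^ t ∈ stdSimplex ℝ ι := by
  induction t with
  | zero => simpa using hν
  | succ t ih => rw [pow_succ, ← vecMul_vecMul]; exact vecMul_mem_stdSimplex_s11 hP ih

lemma vecMul_pow_eq_self {μ : ι → ℝ} (hμ : μ ᵥ* P = μ) (t : ℕ) : μ ᵥ* P ^ t = μ := by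
  induction t with
  | zero => simp
  | succ t ih => rw [pow_succ, ← vecMul_vecMul, ih, hμ]

lemma sum_abs_vecMul_pow_le (hP : ∀ i, ∑ j, P i j = 1) {c : ℝ} (hc : 0 ≤ c)
    (hcontr : ∀ w : ι → ℝ, ∑ i, w i = 0 → ∑ j, |(w ᵥ* P) j| ≤ c * ∑ i, |w i|)
    {w : ι → ℝ} (hw : ∑ i, w i = 0) (t : ℕ) :
    ∑ j, |(w ᵥ* P ^ t) j| ≤ c ^ t * ∑ i, |w i| := by
  induction t generalizing w with
  | zero => simp
  | succ t ih =>
    rw [pow_succ', ← vecMul_vecMul, pow_succ, mul_assoc]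
    refine (ih ((sum_vecMul_of_sum_row_eq_one hP w).trans hw)).trans ?_
    exact mul_le_mul_of_nonneg_left (hcontr w hw) (pow_nonneg hc t)

lemma dist_vecMul_pow_le (hP : ∀ i, ∑ j, P i j = 1) {c : ℝ} (hc : 0 ≤ c)
    (hcontr : ∀ w : ι → ℝ, ∑ i, w i = 0 → ∑ j, |(w ᵥ* P) j| ≤ c * ∑ i, |w i|)
    {ν ν' : ι → ℝ} (hνν' : ∑ i, ν i = ∑ i, ν' i) (t : ℕ) :
    dist (ν ᵥ* P ^ t) (ν' ᵥ* P ^ t) ≤ (∑ i, |ν i - ν' i|) * c ^ t := by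
  have hsum : ∑ i, (ν - ν') i = 0 := by simp [sum_sub_distrib, hνν']
  calc dist (ν ᵥ* P ^ t) (ν' ᵥ* P ^ t) ≤ ∑ j, |((ν - ν') ᵥ* P ^ t) j| := by
        simpa only [sub_vecMul, Pi.sub_apply] using dist_le_sum_abs_sub _ _
    _ ≤ (∑ i, |ν i - ν' i|) * c ^ t := by
        rw [mul_comm]
        exact sum_abs_vecMul_pow_le hP hc hcontr hsum t

theorem exists_stationary_tendsto_vecMul_pow_of_pos [Nonempty ι]
    (hP : ∀ i, P i ∈ stdSimplex ℝ ι) (hpos : ∀ i j, 0 < P i j) :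
    ∃ μ ∈ stdSimplex ℝ ι, μ ᵥ* P = μ ∧
      ∀ ν ∈ stdSimplex ℝ ι, Tendsto (fun t => ν ᵥ* P ^ t) atTop (𝓝 μ) := by
  obtain ⟨c, hc0, hc1, hcontr⟩ := exists_sum_abs_vecMul_le_of_pos hP hpos
  have hdist : ∀ ν ∈ stdSimplex ℝ ι, ∀ ν' ∈ stdSimplex ℝ ι, ∀ t,
      dist (ν ᵥ* P ^ t) (ν' ᵥ* P ^ t) ≤ (∑ i, |ν i - ν' i|) * c ^ t := fun ν hν ν' hν' =>
    dist_vecMul_pow_le (fun i => (hP i).2) hc0 hcontr (hν.2.trans hν'.2.symm)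
  have hc : Tendsto (fun t => c ^ t) atTop (𝓝 0) := tendsto_pow_atTop_nhds_zero_of_lt_one hc0 hc1
  obtain ⟨i⟩ := ‹Nonempty ι›
  set ν₀ : ι → ℝ := Pi.single i 1
  have hν₀ : ν₀ ∈ stdSimplex ℝ ι := single_mem_stdSimplex ℝ i
  have hcauchy : CauchySeq fun t => ν₀ ᵥ* P ^ t :=
    cauchySeq_of_le_geometric c _ hc1 fun t => by
      simpa only [pow_succ', ← vecMul_vecMul] using
        hdist ν₀ hν₀ (ν₀ ᵥ* P) (vecMul_mem_stdSimplex_s11 hP hν₀) t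
  obtain ⟨μ, hμ⟩ := cauchySeq_tendsto_of_complete hcauchy
  refine ⟨μ, (isClosed_stdSimplex ℝ ι).mem_of_tendsto hμ
    (Eventually.of_forall (vecMul_pow_mem_stdSimplex hP hν₀)), ?_, fun ν hν => ?_⟩
  · have hnext : Tendsto (fun t => (ν₀ ᵥ* P ^ t) ᵥ* P) atTop (𝓝 (μ ᵥ* P)) :=
      ((continuous_id.matrix_vecMul continuous_const).tendsto μ).comp hμ
    simp only [vecMul_vecMul, ← pow_succ] at hnext
    exact tendsto_nhds_unique hnext (hμ.comp (tendsto_add_atTop_nat 1))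
  · refine hμ.congr_dist (squeeze_zero (fun _ => dist_nonneg) (fun t => ?_)
      (by simpa using hc.const_mul (∑ i, |ν₀ i - ν i|)))
    exact hdist ν₀ hν₀ ν hν t

theorem tendsto_vecMul_pow_of_pos (hP : ∀ i, P i ∈ stdSimplex ℝ ι) (hpos : ∀ i j, 0 < P i j)
    {μ ν : ι → ℝ} (hμ : μ ∈ stdSimplex ℝ ι) (hμP : μ ᵥ* P = μ) (hν : ν ∈ stdSimplex ℝ ι) :
    Tendsto (fun t => ν ᵥ* P ^ t) atTop (𝓝 μ) := by
  have := nonempty_of_mem_stdSimplex hμ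
  obtain ⟨μ', -, -, hconv⟩ := exists_stationary_tendsto_vecMul_pow_of_pos hP hpos
  have hμμ' : μ = μ' := by simpa [vecMul_pow_eq_self hμP] using hconv μ hμ
  exact hμμ' ▸ hconv ν hν

end StochasticMatrix

section RunningAverage

noncomputable def runningAverage (u : ℕ → ℝ) (T : ℕ) : ℝ := 1 / (T : ℝ) * ∑ t ∈ Icc 1 T, u t

variable {u : ℕ → ℝ} {B : ℝ}

lemma abs_runningAverage_le (hu : ∀ t, |u t| ≤ B) (T : ℕ) : |runningAverage u T| ≤ B := by
  rcases T.eq_zero_or_pos with rfl | hT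
  · simpa [runningAverage] using (abs_nonneg _).trans (hu 0)
  have hT' : (0 : ℝ) < T := Nat.cast_pos.2 hT
  rw [runningAverage, abs_mul, abs_of_pos (by positivity), one_div, inv_mul_le_iff₀ hT']
  calc |∑ t ∈ Icc 1 T, u t| ≤ ∑ _t ∈ Icc 1 T, B :=
        (abs_sum_le_sum_abs _ _).trans (sum_le_sum fun t _ => hu t)
    _ = T * B := by simp

lemma isBoundedUnder_ge_runningAverage (hu : ∀ t, |u t| ≤ B) :
    IsBoundedUnder (· ≥ ·) atTop (runningAverage u) :=
  isBoundedUnder_of ⟨-B, fun T => (abs_le.1 (abs_runningAverage_le hu T)).1⟩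

lemma liminf_runningAverage_le_of_abs_le (hu : ∀ t, |u t| ≤ B) :
    liminf (runningAverage u) atTop ≤ B :=
  liminf_le_of_frequently_le
    (Frequently.of_forall fun T => (abs_le.1 (abs_runningAverage_le hu T)).2)
    (isBoundedUnder_ge_runningAverage hu)

lemma tendsto_runningAverage {l : ℝ} (h : Tendsto u atTop (𝓝 l)) :
    Tendsto (runningAverage u) atTop (𝓝 l) := by
  refine (h.comp (tendsto_add_atTop_nat 1)).cesaro.congr fun T => ?_
  rw [runningAverage, one_div, ← Ico_add_one_right_eq_Icc, sum_Ico_eq_sum_range,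
    Nat.add_sub_cancel]
  simp [add_comm]

lemma sum_Icc_le_of_telescoping {G : ℕ → ℝ} {M C : ℝ} (hG : ∀ t, |G t| ≤ C)
    (htel : ∀ t, u (t + 1) + (G (t + 1) - G t) ≤ M) (T : ℕ) :
    ∑ t ∈ Icc 1 T, u t ≤ T * M + 2 * C := by
  rw [← Ico_add_one_right_eq_Icc, sum_Ico_eq_sum_range, Nat.add_sub_cancel]
  calc ∑ i ∈ range T, u (1 + i)
      ≤ ∑ i ∈ range T, (M - (G (i + 1) - G i)) :=
        sum_le_sum fun i _ => by rw [add_comm 1 i]; linarith [htel i]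
    _ = T * M - (G T - G 0) := by
        rw [sum_sub_distrib, sum_range_sub, sum_const, card_range, nsmul_eq_mul]
    _ ≤ T * M + 2 * C := by linarith [(abs_le.1 (hG T)).1, (abs_le.1 (hG 0)).2]

lemma liminf_runningAverage_le {M C : ℝ} (hu : ∀ t, |u t| ≤ B)
    (hsum : ∀ T, ∑ t ∈ Icc 1 T, u t ≤ T * M + C) :
    liminf (runningAverage u) atTop ≤ M := by
  have hlim : Tendsto (fun T : ℕ => M + C / (T : ℝ)) atTop (𝓝 M) := by
    simpa using (tendsto_const_div_atTop_nhds_zero_nat C).const_add M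
  have hle : ∀ᶠ T : ℕ in atTop, runningAverage u T ≤ M + C / (T : ℝ) := by
    filter_upwards [eventually_gt_atTop 0] with T hT
    have hT' : (0 : ℝ) < T := Nat.cast_pos.2 hT
    rw [runningAverage, one_div, inv_mul_le_iff₀ hT', mul_add, mul_div_cancel₀ _ hT'.ne']
    exact hsum T
  calc liminf (runningAverage u) atTop ≤ liminf (fun T : ℕ => M + C / (T : ℝ)) atTop :=
        liminf_le_liminf hle (isBoundedUnder_ge_runningAverage hu) hlim.isCoboundedUnder_ge
    _ = M := hlim.liminf_eq

end RunningAverage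

section MeanField

variable {A κ ι : Type*} [Fintype ι]

def simplexProduct (κ ι : Type*) [Fintype ι] : Set (κ → ι → ℝ) :=
  {μ | ∀ k, μ k ∈ stdSimplex ℝ ι}

def meanFieldStep (P : κ → A → Matrix ι ι ℝ) (μ : κ → ι → ℝ) (a : A) : κ → ι → ℝ :=
  fun k => μ k ᵥ* P k a

variable {P : κ → A → Matrix ι ι ℝ}

lemma meanFieldStep_mem_simplexProduct (hP : ∀ k a i, P k a i ∈ stdSimplex ℝ ι)
    {μ : κ → ι → ℝ} (hμ : μ ∈ simplexProduct κ ι) (a : A) :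
    meanFieldStep P μ a ∈ simplexProduct κ ι :=
  fun k => vecMul_mem_stdSimplex_s11 (hP k a) (hμ k)

lemma trajectory_mem_simplexProduct (hP : ∀ k a i, P k a i ∈ stdSimplex ℝ ι) {a : ℕ → A}
    {x : ℕ → κ → ι → ℝ} (hx0 : x 0 ∈ simplexProduct κ ι)
    (hx : ∀ t, x (t + 1) = meanFieldStep P (x t) (a (t + 1))) (t : ℕ) :
    x t ∈ simplexProduct κ ι := by
  induction t with
  | zero => exact hx0
  | succ t ih => rw [hx]; exact meanFieldStep_mem_simplexProduct hP ih _

lemma exists_steadyState [DecidableEq ι] (hP : ∀ k a i, P k a i ∈ stdSimplex ℝ ι)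
    (hpos : ∀ k a i j, 0 < P k a i j) {μ₀ : κ → ι → ℝ} (hμ₀ : μ₀ ∈ simplexProduct κ ι) (a : A) :
    ∃ μ ∈ simplexProduct κ ι, μ = meanFieldStep P μ a := by
  have hstationary : ∀ k, ∃ ν ∈ stdSimplex ℝ ι, ν ᵥ* P k a = ν := fun k =>
    have := nonempty_of_mem_stdSimplex (hμ₀ k)
    (exists_stationary_tendsto_vecMul_pow_of_pos (hP k a) (hpos k a)).imp fun _ h => ⟨h.1, h.2.1⟩
  choose μ hμ hμP using hstationary
  exact ⟨μ, hμ, funext fun k => (hμP k).symm⟩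

variable [Fintype κ]

def meanFieldReward (ρ : κ → ℝ) (θ : κ → A → ι → ℝ) (a : A) (μ : κ → ι → ℝ) : ℝ :=
  ∑ k, ρ k * ∑ n, θ k a n * μ k n

def lagrangian (ρ : κ → ℝ) (θ : κ → A → ι → ℝ) (P : κ → A → Matrix ι ι ℝ)
    (φ : (κ → ι → ℝ) → κ → ι → ℝ) (lam : κ → ι → ℝ) (a : A) (μ : κ → ι → ℝ) : ℝ :=
  meanFieldReward ρ θ a (meanFieldStep P μ a) +
    ∑ k, ∑ n, lam k n * (φ (meanFieldStep P μ a) k n - φ μ k n)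

variable {ρ : κ → ℝ} {θ : κ → A → ι → ℝ} {M : ℝ}

lemma abs_meanFieldReward_le (hρ : ρ ∈ stdSimplex ℝ κ) (hθ : ∀ k a n, |θ k a n| ≤ M) (a : A)
    {μ : κ → ι → ℝ} (hμ : μ ∈ simplexProduct κ ι) : |meanFieldReward ρ θ a μ| ≤ M :=
  abs_sum_mul_le_of_mem_stdSimplex (fun k => by
    simpa only [mul_comm (θ k a _)] using abs_sum_mul_le_of_mem_stdSimplex (hθ k a) (hμ k)) hρ

lemma continuous_meanFieldReward (ρ : κ → ℝ) (θ : κ → A → ι → ℝ) (a : A) :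
    Continuous (meanFieldReward ρ θ a) := by
  unfold meanFieldReward
  fun_prop

lemma abs_sum_sum_mul_le (l y : κ → ι → ℝ) :
    |∑ k, ∑ n, l k n * y k n| ≤ (∑ k, ∑ n, |l k n|) * ‖y‖ := by
  rw [sum_mul]
  refine (abs_sum_le_sum_abs _ _).trans (sum_le_sum fun k _ => ?_)
  rw [sum_mul]
  refine (abs_sum_le_sum_abs _ _).trans (sum_le_sum fun n _ => ?_)
  rw [abs_mul]
  exact mul_le_mul_of_nonneg_left ((norm_le_pi_norm (y k) n).trans (norm_le_pi_norm y k))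
    (abs_nonneg _)

variable {φ : (κ → ι → ℝ) → κ → ι → ℝ} {Cφ : ℝ}

lemma bddAbove_range_lagrangian (hP : ∀ k a i, P k a i ∈ stdSimplex ℝ ι)
    (hρ : ρ ∈ stdSimplex ℝ κ) (hθ : ∀ k a n, |θ k a n| ≤ M)
    (hφ : ∀ μ ∈ simplexProduct κ ι, ‖φ μ‖ ≤ Cφ) (lam : κ → ι → ℝ) :
    BddAbove (Set.range fun q : A × simplexProduct κ ι => lagrangian ρ θ P φ lam q.1 q.2) := by
  refine ⟨M + (∑ k, ∑ n, |lam k n|) * (Cφ + Cφ), ?_⟩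
  rintro _ ⟨⟨a, μ, hμ⟩, rfl⟩
  have hstep := meanFieldStep_mem_simplexProduct hP hμ a
  have hpair := abs_sum_sum_mul_le lam (φ (meanFieldStep P μ a) - φ μ)
  have hdiff : ‖φ (meanFieldStep P μ a) - φ μ‖ ≤ Cφ + Cφ :=
    (norm_sub_le _ _).trans (add_le_add (hφ _ hstep) (hφ μ hμ))
  have hlam : 0 ≤ ∑ k, ∑ n, |lam k n| := by positivity
  simp only [Pi.sub_apply] at hpair
  show lagrangian ρ θ P φ lam a μ ≤ _
  unfold lagrangian
  linarith [(abs_le.1 (abs_meanFieldReward_le hρ hθ a hstep)).2, (abs_le.1 hpair).2,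
    mul_le_mul_of_nonneg_left hdiff hlam]

theorem tendsto_runningAverage_reward_of_steadyState [DecidableEq ι]
    (hP : ∀ k a i, P k a i ∈ stdSimplex ℝ ι) (hpos : ∀ k a i j, 0 < P k a i j)
    {a : A} {μ : κ → ι → ℝ} (hμ : μ ∈ simplexProduct κ ι) (hfix : μ = meanFieldStep P μ a)
    {x : ℕ → κ → ι → ℝ} (hx0 : x 0 ∈ simplexProduct κ ι)
    (hx : ∀ t, x (t + 1) = meanFieldStep P (x t) a) :
    Tendsto (runningAverage fun t => meanFieldReward ρ θ a (x t)) atTop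
      (𝓝 (meanFieldReward ρ θ a μ)) := by
  have hpow : ∀ t k, x t k = x 0 k ᵥ* P k a ^ t := by
    intro t
    induction t with
    | zero => simp
    | succ t ih => intro k; rw [hx, meanFieldStep, ih, pow_succ, ← vecMul_vecMul]
  have hconv : Tendsto x atTop (𝓝 μ) := tendsto_pi_nhds.2 fun k =>
    (tendsto_vecMul_pow_of_pos (hP k a) (hpos k a) (hμ k) (congrFun hfix k).symm (hx0 k)).congr
      fun t => (hpow t k).symm
  exact tendsto_runningAverage (((continuous_meanFieldReward ρ θ a).tendsto μ).comp hconv)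

theorem liminf_runningAverage_reward_le_iSup_lagrangian (hP : ∀ k a i, P k a i ∈ stdSimplex ℝ ι)
    (hρ : ρ ∈ stdSimplex ℝ κ) (hθ : ∀ k a n, |θ k a n| ≤ M)
    (hφ : ∀ μ ∈ simplexProduct κ ι, ‖φ μ‖ ≤ Cφ) (lam : κ → ι → ℝ) {a : ℕ → A}
    {x : ℕ → κ → ι → ℝ} (hx0 : x 0 ∈ simplexProduct κ ι)
    (hx : ∀ t, x (t + 1) = meanFieldStep P (x t) (a (t + 1))) :
    liminf (runningAverage fun t => meanFieldReward ρ θ (a t) (x t)) atTop ≤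
      ⨆ q : A × simplexProduct κ ι, lagrangian ρ θ P φ lam q.1 q.2 := by
  have hxD := trajectory_mem_simplexProduct hP hx0 hx
  refine liminf_runningAverage_le (fun t => abs_meanFieldReward_le hρ hθ (a t) (hxD t))
    (sum_Icc_le_of_telescoping (G := fun t => ∑ k, ∑ n, lam k n * φ (x t) k n)
      (fun t => (abs_sum_sum_mul_le _ _).trans
        (mul_le_mul_of_nonneg_left (hφ _ (hxD t)) (by positivity))) fun t => ?_)
  calc _ = lagrangian ρ θ P φ lam (a (t + 1)) (x t) := by
        simp only [lagrangian, ← hx, mul_sub, sum_sub_distrib]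
    _ ≤ _ := le_ciSup (bddAbove_range_lagrangian hP hρ hθ hφ lam) (a (t + 1), ⟨x t, hxD t⟩)

end MeanField

theorem steady_state_duality_gap_general
    {A : Type*} [Nonempty A]
    (K N : ℕ)
    (P : Fin K → A → Matrix (Fin N) (Fin N) ℝ)
    (hPstoch : ∀ k a i, (fun j => P k a i j) ∈ stdSimplex ℝ (Fin N))
    (hPpos : ∀ k a i j, 0 < P k a i j)
    (θ : Fin K → A → Fin N → ℝ)
    (Mθ : ℝ) (hθbdd : ∀ k a n, |θ k a n| ≤ Mθ)
    (ρ : Fin K → ℝ) (hρ : ρ ∈ stdSimplex ℝ (Fin K))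
    (r : A → (Fin K → Fin N → ℝ) → ℝ)
    (hr : ∀ a μ, r a μ = ∑ k, ρ k * ∑ n, θ k a n * μ k n)
    (D : Set (Fin K → Fin N → ℝ)) (hD : D = {μ | ∀ k, μ k ∈ stdSimplex ℝ (Fin N)})
    (step : (Fin K → Fin N → ℝ) → A → (Fin K → Fin N → ℝ))
    (hstep : ∀ μ a, step μ a = fun k => Matrix.vecMul (μ k) (P k a))
    (gbar : ℝ)
    (hgbar : gbar = sSup {x | ∃ a : A, ∃ μ ∈ D, μ = step μ a ∧ x = r a μ})
    (φ : (Fin K → Fin N → ℝ) → Fin K → Fin N → ℝ)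
    (hφbdd : ∃ Cφ : ℝ, ∀ μ ∈ D, ‖φ μ‖ ≤ Cφ)
    (gphi : ℝ)
    (hgphi : gphi = ⨅ lam : Fin K → Fin N → ℝ, ⨆ q : A × D,
      (r q.1 (step (q.2 : Fin K → Fin N → ℝ) q.1) +
        ∑ k, ∑ n, lam k n *
          (φ (step (q.2 : Fin K → Fin N → ℝ) q.1) k n -
            φ (q.2 : Fin K → Fin N → ℝ) k n)))
    (μ0 : Fin K → Fin N → ℝ) (hμ0 : μ0 ∈ D)
    (traj : (ℕ → A) → ℕ → Fin K → Fin N → ℝ)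
    (htraj0 : ∀ a, traj a 0 = μ0)
    (htrajS : ∀ a t, traj a (t + 1) = step (traj a t) (a (t + 1)))
    (gstar : ℝ)
    (hgstar : gstar = ⨆ a : ℕ → A,
      Filter.liminf
        (fun T : ℕ => 1 / (T : ℝ) * ∑ t ∈ Finset.Icc 1 T, r (a t) (traj a t)) atTop) :
    gbar ≤ gstar ∧ gstar ≤ gphi := by
  obtain rfl : r = meanFieldReward ρ θ := funext₂ hr
  obtain rfl : step = meanFieldStep P := funext₂ hstep
  obtain rfl : D = simplexProduct (Fin K) (Fin N) := hD
  subst hgbar hgphi hgstar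
  obtain ⟨Cφ, hφ⟩ := hφbdd
  have htraj0D : ∀ a, traj a 0 ∈ simplexProduct (Fin K) (Fin N) := fun a => htraj0 a ▸ hμ0
  have hbdd : BddAbove (Set.range fun a : ℕ → A =>
      liminf (runningAverage fun t => meanFieldReward ρ θ (a t) (traj a t)) atTop) := by
    refine ⟨Mθ, ?_⟩
    rintro _ ⟨a, rfl⟩
    exact liminf_runningAverage_le_of_abs_le fun t => abs_meanFieldReward_le hρ hθbdd _
      (trajectory_mem_simplexProduct hPstoch (htraj0D a) (htrajS a) t)
  refine ⟨csSup_le ?_ ?_, le_ciInf fun lam => ciSup_le fun a => ?_⟩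
  · obtain ⟨a₀⟩ := ‹Nonempty A›
    obtain ⟨μ, hμ, hfix⟩ := exists_steadyState hPstoch hPpos hμ0 a₀
    exact ⟨_, a₀, μ, hμ, hfix, rfl⟩
  · rintro _ ⟨a, μ, hμ, hfix, rfl⟩
    exact le_ciSup_of_le hbdd (fun _ => a) (tendsto_runningAverage_reward_of_steadyState
      hPstoch hPpos hμ hfix (htraj0D _) (htrajS _)).liminf_eq.ge
  · exact liminf_runningAverage_reward_le_iSup_lagrangian hPstoch hρ hθbdd hφ lam
      (htraj0D a) (htrajS a)

/-- Proposition 3 of the paper: suboptimality gap of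
steady-state policies. With positive transition matrices, the optimal
steady-state gain `ḡ`, the optimal long-run average gain `g*(μ₀)` and the
dual value `g^φ` of the Lagrangian associated with any bounded injective
`φ` satisfy `ḡ ≤ g*(μ₀) ≤ g^φ` for every initial state `μ₀`. -/
theorem steady_state_duality_gap
    {A : Type*} [MetricSpace A] [CompactSpace A] [Nonempty A]
    (K N : ℕ)
    (P : Fin K → A → Matrix (Fin N) (Fin N) ℝ)
    (hPcont : ∀ k, Continuous (P k))
    (hPstoch : ∀ k a i, (fun j => P k a i j) ∈ stdSimplex ℝ (Fin N))
    (hPpos : ∀ k a i j, 0 < P k a i j)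
    (θ : Fin K → A → Fin N → ℝ) (hθcont : ∀ k, Continuous (θ k))
    (Mθ : ℝ) (hθbdd : ∀ k a n, |θ k a n| ≤ Mθ)
    (ρ : Fin K → ℝ) (hρ : ρ ∈ stdSimplex ℝ (Fin K))
    (r : A → (Fin K → Fin N → ℝ) → ℝ)
    (hr : ∀ a μ, r a μ = ∑ k, ρ k * ∑ n, θ k a n * μ k n)
    (D : Set (Fin K → Fin N → ℝ)) (hD : D = {μ | ∀ k, μ k ∈ stdSimplex ℝ (Fin N)})
    (step : (Fin K → Fin N → ℝ) → A → (Fin K → Fin N → ℝ))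
    (hstep : ∀ μ a, step μ a = fun k => Matrix.vecMul (μ k) (P k a))
    (gbar : ℝ)
    (hgbar : gbar = sSup {x | ∃ a : A, ∃ μ ∈ D, μ = step μ a ∧ x = r a μ})
    (φ : (Fin K → Fin N → ℝ) → Fin K → Fin N → ℝ)
    (hφinj : Set.InjOn φ D)
    (hφbdd : ∃ Cφ : ℝ, ∀ μ ∈ D, ‖φ μ‖ ≤ Cφ)
    (gphi : ℝ)
    (hgphi : gphi = ⨅ lam : Fin K → Fin N → ℝ, ⨆ q : A × D,
      (r q.1 (step (q.2 : Fin K → Fin N → ℝ) q.1) +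
        ∑ k, ∑ n, lam k n *
          (φ (step (q.2 : Fin K → Fin N → ℝ) q.1) k n -
            φ (q.2 : Fin K → Fin N → ℝ) k n)))
    (μ0 : Fin K → Fin N → ℝ) (hμ0 : μ0 ∈ D)
    (traj : (ℕ → A) → ℕ → Fin K → Fin N → ℝ)
    (htraj0 : ∀ a, traj a 0 = μ0)
    (htrajS : ∀ a t, traj a (t + 1) = step (traj a t) (a (t + 1)))
    (gstar : ℝ)
    (hgstar : gstar = ⨆ a : ℕ → A,
      Filter.liminf
        (fun T : ℕ => 1 / (T : ℝ) * ∑ t ∈ Finset.Icc 1 T, r (a t) (traj a t)) atTop) :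
    gbar ≤ gstar ∧ gstar ≤ gphi :=
  steady_state_duality_gap_general K N P hPstoch hPpos θ Mθ hθbdd ρ hρ r hr D hD step hstep gbar
    hgbar φ hφbdd gphi hgphi μ0 hμ0 traj htraj0 htrajS gstar hgstar
end

section
/- Fix β > 0, N ≥ 1, utilities U ∈ ℝ^N and switching costs γ ∈ ℝ^N with γ_n ≥ 0. Define the logit-with-inertia kernel P ∈ ℝ^{N×N} by P_{nm} = exp(β[U_m + γ_n·1_{m=n}]) / Σ_{l=1}^N exp(β[U_l + γ_n·1_{l=n}]), the instantaneous logit response μ_L ∈ Δ_N by μ_L^n = exp(βU_n)/Σ_l exp(βU_l), η^n = 1 + (exp(βγ_n) − 1)·μ_L^n, and μ̄ ∈ Δ_N by μ̄^n = η^n μ_L^n / Σ_{l=1}^N η^l μ_L^l. Then μ̄ is a stationary distribution of P (μ̄P = μ̄), and for every initial distribution μ_0 ∈ Δ_N the iterates μ_0 P^t converge to μ̄ as t → ∞. -/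
/-!
Writing `μ_L^n = w_n / Z` with `w_n = e^{βU_n}`, the normaliser of row `n` of `P` is
`Z + (e^{βγ_n} - 1) w_n = Z η^n`, so `P_{nm} = μ_L^m / η^n` off the diagonal. Hence
`μ̄^n P_{nm} = μ_L^n μ_L^m / Σ_l η^l μ_L^l` is symmetric in `n, m`: `μ̄` satisfies detailed
balance and is therefore stationary. Convergence is Doeblin's argument: if `c_m ≤ P_{nm}`
for all `n, m`, then `P` contracts zero-sum vectors in `ℓ¹` by the factor `1 - Σ_m c_m`,
and for a positive matrix one may take `c_m = min_n P_{nm}`.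
-/

open Finset Filter Topology

namespace Matrix

variable {ι : Type*} [Fintype ι] {P : Matrix ι ι ℝ}

theorem sum_vecMul_of_sum_row_eq_one (hP : ∀ i, ∑ j, P i j = 1) (x : ι → ℝ) :
    ∑ j, (x ᵥ* P) j = ∑ i, x i := by
  simp only [vecMul, dotProduct]
  rw [Finset.sum_comm]
  simp only [← Finset.mul_sum, hP, mul_one]

theorem vecMul_eq_self_of_detailed_balance (hP : ∀ i, ∑ j, P i j = 1) {ν : ι → ℝ}
    (hν : ∀ i j, ν i * P i j = ν j * P j i) : ν ᵥ* P = ν := by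
  funext j
  simp only [vecMul, dotProduct, hν _ j, ← Finset.mul_sum, hP, mul_one]

theorem vecMul_pow_eq_self [DecidableEq ι] {ν : ι → ℝ} (hν : ν ᵥ* P = ν) (t : ℕ) :
    ν ᵥ* P ^ t = ν := by
  induction t with
  | zero => simp
  | succ t ih => rw [pow_succ, ← vecMul_vecMul, ih, hν]

theorem sum_le_one_of_minorization [Nonempty ι] (hP : ∀ i, ∑ j, P i j = 1) {c : ι → ℝ}
    (hc : ∀ i j, c j ≤ P i j) : ∑ j, c j ≤ 1 := by
  obtain ⟨i⟩ := ‹Nonempty ι›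
  rw [← hP i]
  exact sum_le_sum fun j _ => hc i j

theorem sum_abs_vecMul_le_of_minorization (hP : ∀ i, ∑ j, P i j = 1) {c : ι → ℝ}
    (hc : ∀ i j, c j ≤ P i j) {x : ι → ℝ} (hx : ∑ i, x i = 0) :
    ∑ j, |(x ᵥ* P) j| ≤ (1 - ∑ j, c j) * ∑ i, |x i| := by
  have hshift : ∀ j, (x ᵥ* P) j = ∑ i, x i * (P i j - c j) := fun j => by
    simp only [vecMul, dotProduct, mul_sub, Finset.sum_sub_distrib, ← Finset.sum_mul, hx,
      zero_mul, sub_zero]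
  calc ∑ j, |(x ᵥ* P) j| ≤ ∑ j, ∑ i, |x i| * (P i j - c j) := by
        gcongr with j
        rw [hshift]
        refine (abs_sum_le_sum_abs _ _).trans_eq (sum_congr rfl fun i _ => ?_)
        rw [abs_mul, abs_of_nonneg (sub_nonneg.2 (hc i j))]
    _ = (1 - ∑ j, c j) * ∑ i, |x i| := by
        rw [Finset.sum_comm, Finset.mul_sum]
        refine sum_congr rfl fun i _ => ?_
        rw [← Finset.mul_sum, Finset.sum_sub_distrib, hP, mul_comm]

theorem sum_abs_vecMul_pow_le_of_minorization [DecidableEq ι] [Nonempty ι]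
    (hP : ∀ i, ∑ j, P i j = 1) {c : ι → ℝ} (hc : ∀ i j, c j ≤ P i j) (t : ℕ) {x : ι → ℝ}
    (hx : ∑ i, x i = 0) :
    ∑ j, |(x ᵥ* P ^ t) j| ≤ (1 - ∑ j, c j) ^ t * ∑ i, |x i| := by
  induction t generalizing x with
  | zero => simp
  | succ t ih =>
    have hxP : ∑ j, (x ᵥ* P) j = 0 := by rw [sum_vecMul_of_sum_row_eq_one hP, hx]
    rw [pow_succ', ← vecMul_vecMul, pow_succ, mul_assoc]
    exact (ih hxP).trans <| mul_le_mul_of_nonneg_left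
      (sum_abs_vecMul_le_of_minorization hP hc hx)
      (pow_nonneg (sub_nonneg.2 (sum_le_one_of_minorization hP hc)) t)

theorem tendsto_vecMul_pow_of_minorization [DecidableEq ι] [Nonempty ι]
    (hP : ∀ i, ∑ j, P i j = 1) {c : ι → ℝ} (hc : ∀ i j, c j ≤ P i j) (hc_pos : 0 < ∑ j, c j)
    {ν μ : ι → ℝ} (hν : ν ᵥ* P = ν) (hν_sum : ∑ i, ν i = 1) (hμ_sum : ∑ i, μ i = 1) :
    Tendsto (fun t : ℕ => μ ᵥ* P ^ t) atTop (𝓝 ν) := by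
  have hx : ∑ i, (μ - ν) i = 0 := by
    simp only [Pi.sub_apply, Finset.sum_sub_distrib, hμ_sum, hν_sum, sub_self]
  have hbound : ∀ t : ℕ, ‖μ ᵥ* P ^ t - ν‖ ≤ (1 - ∑ j, c j) ^ t * ∑ i, |(μ - ν) i| := by
    intro t
    rw [show μ ᵥ* P ^ t - ν = (μ - ν) ᵥ* P ^ t by rw [sub_vecMul, vecMul_pow_eq_self hν]]
    refine le_trans ?_ (sum_abs_vecMul_pow_le_of_minorization hP hc t hx)
    refine (pi_norm_le_iff_of_nonneg (sum_nonneg fun j _ => abs_nonneg _)).2 fun j => ?_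
    exact single_le_sum (f := fun j => |((μ - ν) ᵥ* P ^ t) j|) (fun j _ => abs_nonneg _)
      (mem_univ j)
  have hq : Tendsto (fun t : ℕ => (1 - ∑ j, c j) ^ t) atTop (𝓝 0) :=
    tendsto_pow_atTop_nhds_zero_of_lt_one
      (sub_nonneg.2 (sum_le_one_of_minorization hP hc)) (by linarith)
  rw [tendsto_iff_norm_sub_tendsto_zero]
  exact squeeze_zero (fun t => norm_nonneg _) hbound (by simpa using hq.mul_const _)

theorem tendsto_vecMul_pow_of_pos [DecidableEq ι] [Nonempty ι] (hpos : ∀ i j, 0 < P i j)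
    (hP : ∀ i, ∑ j, P i j = 1) {ν μ : ι → ℝ} (hν : ν ᵥ* P = ν) (hν_sum : ∑ i, ν i = 1)
    (hμ_sum : ∑ i, μ i = 1) :
    Tendsto (fun t : ℕ => μ ᵥ* P ^ t) atTop (𝓝 ν) :=
  tendsto_vecMul_pow_of_minorization hP (c := fun j => univ.inf' univ_nonempty fun i => P i j)
    (fun i _ => inf'_le _ (mem_univ i))
    (sum_pos (fun j _ => (lt_inf'_iff _).2 fun i _ => hpos i j) univ_nonempty) hν hν_sum hμ_sum

end Matrix

theorem sum_div_sum_eq_one {ι : Type*} [Fintype ι] {w : ι → ℝ} (hw : ∑ i, w i ≠ 0) :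
    ∑ i, w i / ∑ j, w j = 1 := by
  rw [← Finset.sum_div, div_self hw]

theorem div_sum_mem_stdSimplex {ι : Type*} [Fintype ι] [Nonempty ι] {w : ι → ℝ}
    (hw : ∀ i, 0 < w i) : (fun i => w i / ∑ j, w j) ∈ stdSimplex ℝ ι :=
  have hsum : 0 < ∑ j, w j := sum_pos (fun j _ => hw j) univ_nonempty
  ⟨fun i => (div_pos (hw i) hsum).le, sum_div_sum_eq_one hsum.ne'⟩

theorem Real.sum_exp_pos {ι : Type*} [Fintype ι] [Nonempty ι] (f : ι → ℝ) :
    0 < ∑ i, Real.exp (f i) :=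
  sum_pos (fun _ _ => Real.exp_pos _) univ_nonempty

theorem Real.sum_exp_mul_add_ite {ι : Type*} [Fintype ι] [DecidableEq ι] (β g : ℝ)
    (U : ι → ℝ) (n : ι) :
    ∑ l, Real.exp (β * (U l + if l = n then g else 0)) =
      ∑ l, Real.exp (β * U l) + (Real.exp (β * g) - 1) * Real.exp (β * U n) := by
  have hterm : ∀ l, Real.exp (β * (U l + if l = n then g else 0)) =
      Real.exp (β * U l) + if l = n then (Real.exp (β * g) - 1) * Real.exp (β * U n) else 0 := by
    intro l
    split_ifs with h
    · rw [h, mul_add, Real.exp_add]; ring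
    · simp
  simp only [hterm, sum_add_distrib, sum_ite_eq', mem_univ, if_true]

theorem logit_inertia_stationary_distribution_general
    (β : ℝ) (N : ℕ) (hN : 1 ≤ N)
    (U γ : Fin N → ℝ)
    (P : Matrix (Fin N) (Fin N) ℝ)
    (hP : ∀ n m, P n m = Real.exp (β * (U m + if m = n then γ n else 0)) /
      ∑ l, Real.exp (β * (U l + if l = n then γ n else 0)))
    (μL : Fin N → ℝ)
    (hμL : ∀ n, μL n = Real.exp (β * U n) / ∑ l, Real.exp (β * U l))
    (η : Fin N → ℝ) (hη : ∀ n, η n = 1 + (Real.exp (β * γ n) - 1) * μL n)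
    (μbar : Fin N → ℝ) (hμbar : ∀ n, μbar n = η n * μL n / ∑ l, η l * μL l) :
    μbar ∈ stdSimplex ℝ (Fin N) ∧ Matrix.vecMul μbar P = μbar ∧
      ∀ μ0 ∈ stdSimplex ℝ (Fin N),
        Filter.Tendsto (fun t : ℕ => Matrix.vecMul μ0 (P ^ t)) Filter.atTop
          (nhds μbar) := by
  have : Nonempty (Fin N) := Fin.pos_iff_nonempty.mp hN
  set Z := ∑ l, Real.exp (β * U l)
  have hZ : Z ≠ 0 := (Real.sum_exp_pos _).ne'
  have hexp : ∀ n, Real.exp (β * U n) = μL n * Z := fun n => by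
    rw [hμL, div_mul_cancel₀ _ hZ]
  have hμL_pos : ∀ n, 0 < μL n := fun n => by
    rw [hμL]; exact div_pos (Real.exp_pos _) (Real.sum_exp_pos _)
  have hden : ∀ n, ∑ l, Real.exp (β * (U l + if l = n then γ n else 0)) = Z * η n := fun n => by
    rw [Real.sum_exp_mul_add_ite, hη, hexp]; ring
  have hη_pos : ∀ n, 0 < η n := fun n =>
    pos_of_mul_pos_right ((hden n) ▸ Real.sum_exp_pos _) (Real.sum_exp_pos _).le
  have hP_pos : ∀ n m, 0 < P n m := fun n m => by
    rw [hP]; exact div_pos (Real.exp_pos _) (Real.sum_exp_pos _)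
  have hP_row : ∀ n, ∑ m, P n m = 1 := fun n => by
    simp only [hP]; exact sum_div_sum_eq_one (Real.sum_exp_pos _).ne'
  have hP_off : ∀ n m, m ≠ n → P n m = μL m / η n := fun n m h => by
    rw [hP, hden, if_neg h, add_zero, hexp, mul_comm Z, mul_div_mul_right _ _ hZ]
  have hμbar_mem : μbar ∈ stdSimplex ℝ (Fin N) := by
    rw [funext hμbar]; exact div_sum_mem_stdSimplex fun n => mul_pos (hη_pos n) (hμL_pos n)
  have hstat : Matrix.vecMul μbar P = μbar :=
    Matrix.vecMul_eq_self_of_detailed_balance hP_row fun n m => by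
      rcases eq_or_ne m n with rfl | h
      · rfl
      · rw [hP_off n m h, hP_off m n h.symm, hμbar, hμbar]
        field_simp [(hη_pos n).ne', (hη_pos m).ne']
  exact ⟨hμbar_mem, hstat, fun μ0 hμ0 =>
    Matrix.tendsto_vecMul_pow_of_pos hP_pos hP_row hstat hμbar_mem.2 hμ0.2⟩

/-- Theorem 3 of the paper: closed form for the stationary
distribution of the logit-with-inertia kernel. The distribution
`μ̄^n = η^n μ_L^n / Σ_l η^l μ_L^l` with `η^n = 1 + (e^{βγ_n} - 1) μ_L^n` is
stationary for the kernel `P`, and `μ₀ Pᵗ → μ̄` for every initial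
distribution `μ₀ ∈ Δ_N`. -/
theorem logit_inertia_stationary_distribution
    (β : ℝ) (hβ : 0 < β) (N : ℕ) (hN : 1 ≤ N)
    (U γ : Fin N → ℝ) (hγ : ∀ n, 0 ≤ γ n)
    (P : Matrix (Fin N) (Fin N) ℝ)
    (hP : ∀ n m, P n m = Real.exp (β * (U m + if m = n then γ n else 0)) /
      ∑ l, Real.exp (β * (U l + if l = n then γ n else 0)))
    (μL : Fin N → ℝ)
    (hμL : ∀ n, μL n = Real.exp (β * U n) / ∑ l, Real.exp (β * U l))
    (η : Fin N → ℝ) (hη : ∀ n, η n = 1 + (Real.exp (β * γ n) - 1) * μL n)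
    (μbar : Fin N → ℝ) (hμbar : ∀ n, μbar n = η n * μL n / ∑ l, η l * μL l) :
    μbar ∈ stdSimplex ℝ (Fin N) ∧ Matrix.vecMul μbar P = μbar ∧
      ∀ μ0 ∈ stdSimplex ℝ (Fin N),
        Filter.Tendsto (fun t : ℕ => Matrix.vecMul μ0 (P ^ t)) Filter.atTop
          (nhds μbar) :=
  logit_inertia_stationary_distribution_general β N hN U γ P hP μL hμL η hη μbar hμbar
end

section
/- Majorization property of the steady state: fix β > 0, N ≥ 1, utilities U ∈ ℝ^N and a uniform switching cost γ > 0 (γ_n = γ for all n). With μ_L^n = exp(βU_n)/Σ_l exp(βU_l), η^n = 1 + (exp(βγ) − 1)·μ_L^n, and μ̄^n = η^n μ_L^n / Σ_l η^l μ_L^l, the stationary distribution μ̄ majorizes the instantaneous logit response μ_L: for every m ∈ {1,…,N}, max over subsets S ⊆ {1,…,N} with |S| = m of Σ_{n∈S} μ̄^n is greater than or equal to max over subsets S ⊆ {1,…,N} with |S| = m of Σ_{n∈S} μ_L^n. -/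
/-!
Take `T` to be a set of `m` indices carrying the `m` largest values of `μL`; it maximizes
`∑ n ∈ S, μL n` over all `S` with `|S| = m`. The weights `η = 1 + (e^{βγ} - 1) μL` are
nondecreasing in `μL`, so every weight inside `T` dominates every weight outside `T`.
Reweighting a distribution by such weights and renormalizing can only move mass into `T`,
hence `∑ n ∈ T, μL n ≤ ∑ n ∈ T, μbar n`.
-/

open Finset

variable {ι : Type*}

theorem Finset.exists_card_eq_forall_card_eq_sum_le {M : Type*} [AddCommMonoid M]
    [LinearOrder M] [Fintype ι] (f : ι → M) {m : ℕ} (hm : m ≤ Fintype.card ι) :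
    ∃ T : Finset ι, #T = m ∧ ∀ S : Finset ι, #S = m → ∑ i ∈ S, f i ≤ ∑ i ∈ T, f i := by
  have hne : (univ.powersetCard m : Finset (Finset ι)).Nonempty :=
    powersetCard_nonempty.mpr (by simpa using hm)
  obtain ⟨T, hT, hTmax⟩ := exists_max_image _ (fun T => ∑ i ∈ T, f i) hne
  exact ⟨T, (mem_powersetCard.mp hT).2, fun S hS => hTmax S (by simp [hS])⟩

/-- Otherwise exchanging `n` for `k` would increase the sum. -/
theorem Finset.le_of_forall_card_eq_sum_le {M : Type*} [AddCommMonoid M] [LinearOrder M]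
    [IsOrderedCancelAddMonoid M] [DecidableEq ι] {T : Finset ι} {f : ι → M}
    (hT : ∀ S : Finset ι, #S = #T → ∑ i ∈ S, f i ≤ ∑ i ∈ T, f i)
    {n k : ι} (hn : n ∈ T) (hk : k ∉ T) : f k ≤ f n := by
  have hk' : k ∉ T.erase n := fun h => hk (mem_of_mem_erase h)
  have hcard : #(insert k (T.erase n)) = #T := by
    rw [card_insert_of_notMem hk', card_erase_add_one hn]
  have h := hT _ hcard
  rw [sum_insert hk', ← sum_erase_add T f hn, add_comm] at h
  exact le_of_add_le_add_left h

theorem Finset.sum_compl_mul_mul_sum_le {K : Type*} [CommRing K] [LinearOrder K]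
    [IsStrictOrderedRing K] [Fintype ι] [DecidableEq ι] {T : Finset ι} {p w : ι → K}
    (hp : ∀ i, 0 ≤ p i) (hw : ∀ n ∈ T, ∀ k ∉ T, w k ≤ w n) :
    (∑ k ∈ Tᶜ, w k * p k) * ∑ n ∈ T, p n ≤ (∑ n ∈ T, w n * p n) * ∑ k ∈ Tᶜ, p k := by
  rw [sum_mul_sum, sum_mul_sum, sum_comm]
  refine sum_le_sum fun n hn => sum_le_sum fun k hk => ?_
  have h := mul_le_mul_of_nonneg_right (hw n hn k (mem_compl.mp hk))
    (mul_nonneg (hp k) (hp n))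
  linarith

theorem Finset.sum_div_sum_le_sum_mul_div_sum_mul {K : Type*} [Field K] [LinearOrder K]
    [IsStrictOrderedRing K] [Fintype ι] [DecidableEq ι] {T : Finset ι} {p w : ι → K}
    (hp : ∀ i, 0 ≤ p i) (hw : ∀ n ∈ T, ∀ k ∉ T, w k ≤ w n)
    (hP : 0 < ∑ i, p i) (hW : 0 < ∑ i, w i * p i) :
    (∑ i ∈ T, p i) / ∑ i, p i ≤ (∑ i ∈ T, w i * p i) / ∑ i, w i * p i := by
  rw [div_le_div_iff₀ hP hW, ← sum_add_sum_compl T p,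
    ← sum_add_sum_compl T fun i => w i * p i]
  linarith [sum_compl_mul_mul_sum_le hp hw]

theorem sum_exp_div_sum_exp [Fintype ι] [Nonempty ι] (a : ι → ℝ) :
    ∑ i, Real.exp (a i) / ∑ j, Real.exp (a j) = 1 := by
  rw [← sum_div, div_self (sum_pos (fun j _ => Real.exp_pos (a j)) univ_nonempty).ne']

theorem steady_state_majorizes_logit_general
    (β : ℝ) (hβ : 0 < β) (N : ℕ)
    (U : Fin N → ℝ) (γ : ℝ) (hγ : 0 < γ)
    (μL : Fin N → ℝ)
    (hμL : ∀ n, μL n = Real.exp (β * U n) / ∑ l, Real.exp (β * U l))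
    (η : Fin N → ℝ) (hη : ∀ n, η n = 1 + (Real.exp (β * γ) - 1) * μL n)
    (μbar : Fin N → ℝ) (hμbar : ∀ n, μbar n = η n * μL n / ∑ l, η l * μL l) :
    ∀ m : ℕ, 1 ≤ m → m ≤ N →
      ∀ S : Finset (Fin N), S.card = m →
        ∃ T : Finset (Fin N), T.card = m ∧ ∑ n ∈ S, μL n ≤ ∑ n ∈ T, μbar n := by
  intro m hm1 hmN S hS
  have : Nonempty (Fin N) := ⟨⟨0, by omega⟩⟩
  obtain ⟨T, hT, hTmax⟩ :=
    exists_card_eq_forall_card_eq_sum_le μL (m := m) (by simpa using hmN)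
  refine ⟨T, hT, (hTmax S hS).trans ?_⟩
  have hμL_nonneg (n : Fin N) : 0 ≤ μL n := by rw [hμL]; positivity
  have hμL_sum : ∑ n, μL n = 1 := by simp only [hμL]; exact sum_exp_div_sum_exp _
  have hc : 0 ≤ Real.exp (β * γ) - 1 := by linarith [Real.one_le_exp (mul_pos hβ hγ).le]
  have hη_le (n : Fin N) : μL n ≤ η n * μL n := by
    rw [hη]; nlinarith [mul_nonneg hc (mul_nonneg (hμL_nonneg n) (hμL_nonneg n))]
  have hη_top : ∀ n ∈ T, ∀ k ∉ T, η k ≤ η n := fun n hn k hk => by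
    have := le_of_forall_card_eq_sum_le (hT ▸ hTmax) hn hk
    rw [hη, hη]
    gcongr
  calc ∑ n ∈ T, μL n = (∑ n ∈ T, μL n) / ∑ n, μL n := by rw [hμL_sum, div_one]
    _ ≤ (∑ n ∈ T, η n * μL n) / ∑ n, η n * μL n :=
      sum_div_sum_le_sum_mul_div_sum_mul hμL_nonneg hη_top (by rw [hμL_sum]; norm_num)
        (by linarith [sum_le_sum fun n (_ : n ∈ univ) => hη_le n])
    _ = ∑ n ∈ T, μbar n := by simp only [hμbar, sum_div]

/-- Proposition 5 of the paper: majorization property of the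
steady state. With a uniform switching cost `γ > 0`, the stationary
distribution `μ̄` of the logit-with-inertia kernel majorizes the instantaneous
logit response `μ_L`: for every `m ∈ {1,…,N}`, the maximal sum of `μ_L` over
sets of cardinality `m` is at most the maximal sum of `μ̄` over sets of
cardinality `m`. -/
theorem steady_state_majorizes_logit
    (β : ℝ) (hβ : 0 < β) (N : ℕ) (hN : 1 ≤ N)
    (U : Fin N → ℝ) (γ : ℝ) (hγ : 0 < γ)
    (μL : Fin N → ℝ)
    (hμL : ∀ n, μL n = Real.exp (β * U n) / ∑ l, Real.exp (β * U l))
    (η : Fin N → ℝ) (hη : ∀ n, η n = 1 + (Real.exp (β * γ) - 1) * μL n)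
    (μbar : Fin N → ℝ) (hμbar : ∀ n, μbar n = η n * μL n / ∑ l, η l * μL l) :
    ∀ m : ℕ, 1 ≤ m → m ≤ N →
      ∀ S : Finset (Fin N), S.card = m →
        ∃ T : Finset (Fin N), T.card = m ∧ ∑ n ∈ S, μL n ≤ ∑ n ∈ T, μbar n :=
  steady_state_majorizes_logit_general β hβ N U γ hγ μL hμL η hη μbar hμbar
end

section
/- Boundedness of the optimal steady-state gain: fix K ≥ 1, N ≥ 2, β > 0, weights ρ ∈ Δ_K, and for each cluster k ∈ {1,…,K} and each offer n ∈ {1,…,N−1}: a reservation price R^{kn} ∈ ℝ, a consumption E^{kn} > 0, and a cost C^{kn} ∈ ℝ; each cluster has a uniform switching cost γ^k > 0. For a price vector a ∈ ℝ^{N−1}, set U^{kn}(a) = R^{kn} − E^{kn}·a_n for n < N and U^{kN}(a) = 0; θ^{kn}(a) = E^{kn}·a_n − C^{kn} for n < N and θ^{kN}(a) = 0; μ_L^{kn}(a) = exp(βU^{kn}(a))/Σ_{l=1}^N exp(βU^{kl}(a)); η^{kn}(a) = 1 + (exp(βγ^k) − 1)·μ_L^{kn}(a); and μ̄^{kn}(a)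 = η^{kn}(a)·μ_L^{kn}(a)/Σ_{l=1}^N η^{kl}(a)·μ_L^{kl}(a). Then the optimal steady-state gain over unbounded prices, ḡ = sup_{a∈ℝ^{N−1}} Σ_{k=1}^K ρ_k Σ_{n=1}^N θ^{kn}(a)·μ̄^{kn}(a), satisfies ḡ ≤ max_{k∈[K], n∈[N]} (R^{kn} − C^{kn}) + N/(β·e), where by convention R^{kN} = C^{kN} = 0. In particular, ḡ is bounded independently of the switching costs γ^k. -/
/-!
Write `u = U^k(a)` for the utilities of cluster `k` and `x_n = max(-u_n, 0)`. Since
`θ^{kn} + u_n = R^{kn} - C^{kn}`, the gain of cluster `k` is at most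
`max (R - C) + ∑_n x_n μ̄_n`, so it suffices to bound the last sum by `N/(βe)`.
The outside option has utility `0`, so the logit denominator is at least `1` and
`x_n μ_L^n ≤ x_n e^{-βx_n} ≤ 1/(βe)`. Writing `c = e^{βγ} - 1 ≥ 0`, the stationary
distribution is `μ̄_n = (1 + c μ_L^n) μ_L^n / (1 + c ∑ (μ_L^l)²)`: its numerator against `x`
is at most `(N + c)/(βe)`, while by Cauchy–Schwarz `∑ (μ_L^l)² ≥ 1/N`, so the denominator
is at least `(N + c)/N`.
-/

open Finset Real

section

variable {ι : Type*} [Fintype ι]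

noncomputable def logit (β : ℝ) (u : ι → ℝ) (i : ι) : ℝ :=
  exp (β * u i) / ∑ l, exp (β * u l)

noncomputable def inertiaStationary (c : ℝ) (μ : ι → ℝ) (i : ι) : ℝ :=
  (1 + c * μ i) * μ i / ∑ l, (1 + c * μ l) * μ l

lemma logit_nonneg (β : ℝ) (u : ι → ℝ) (i : ι) : 0 ≤ logit β u i :=
  div_nonneg (exp_pos _).le (sum_nonneg fun _ _ => (exp_pos _).le)

lemma sum_logit [Nonempty ι] (β : ℝ) (u : ι → ℝ) : ∑ i, logit β u i = 1 := by
  unfold logit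
  rw [← sum_div]
  exact div_self (sum_pos (fun _ _ => exp_pos _) univ_nonempty).ne'

lemma logit_le_exp {β : ℝ} {u : ι → ℝ} {i₀ : ι} (h₀ : u i₀ = 0) (i : ι) :
    logit β u i ≤ exp (β * u i) := by
  refine div_le_self (exp_pos _).le ?_
  calc (1 : ℝ) = exp (β * u i₀) := by rw [h₀, mul_zero, exp_zero]
    _ ≤ ∑ l, exp (β * u l) :=
        single_le_sum (f := fun l => exp (β * u l)) (fun _ _ => (exp_pos _).le) (mem_univ i₀)

lemma max_neg_zero_mul_logit_le {β : ℝ} (hβ : 0 < β) {u : ι → ℝ} {i₀ : ι} (h₀ : u i₀ = 0)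
    (i : ι) : max (-u i) 0 * logit β u i ≤ 1 / (β * exp 1) := by
  rcases le_total 0 (u i) with hu | hu
  · rw [max_eq_right (neg_nonpos.2 hu), zero_mul]
    positivity
  · rw [max_eq_left (neg_nonneg.2 hu)]
    calc -u i * logit β u i ≤ -u i * exp (β * u i) :=
          mul_le_mul_of_nonneg_left (logit_le_exp h₀ i) (neg_nonneg.2 hu)
      _ = (β * -u i) * exp (-(β * -u i)) / β := by field_simp
      _ ≤ exp (-1) / β := by gcongr; exact mul_exp_neg_le_exp_neg_one _
      _ = 1 / (β * exp 1) := by rw [exp_neg]; field_simp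

lemma one_le_card_mul_sum_sq {μ : ι → ℝ} (hμ : ∑ i, μ i = 1) :
    1 ≤ (Fintype.card ι : ℝ) * ∑ i, μ i ^ 2 := by
  simpa [hμ] using sq_sum_le_card_mul_sum_sq (s := univ) (f := μ)

lemma sum_inertia_weight {μ : ι → ℝ} (hμ : ∑ i, μ i = 1) (c : ℝ) :
    ∑ i, (1 + c * μ i) * μ i = 1 + c * ∑ i, μ i ^ 2 := by
  simp only [add_mul, one_mul, sum_add_distrib, hμ, mul_sum, sq, mul_assoc]

section inertia

variable {c : ℝ} {μ : ι → ℝ}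

lemma inertia_weight_sum_pos (hc : 0 ≤ c) (hμ : ∑ i, μ i = 1) :
    0 < ∑ i, (1 + c * μ i) * μ i := by
  rw [sum_inertia_weight hμ]
  positivity

lemma inertiaStationary_nonneg (hc : 0 ≤ c) (hμ0 : ∀ i, 0 ≤ μ i) (hμ : ∑ i, μ i = 1) (i : ι) :
    0 ≤ inertiaStationary c μ i :=
  div_nonneg (by have := hμ0 i; positivity) (inertia_weight_sum_pos hc hμ).le

lemma sum_inertiaStationary (hc : 0 ≤ c) (hμ : ∑ i, μ i = 1) :
    ∑ i, inertiaStationary c μ i = 1 := by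
  unfold inertiaStationary
  rw [← sum_div]
  exact div_self (inertia_weight_sum_pos hc hμ).ne'

lemma sum_mul_inertiaStationary_le (hc : 0 ≤ c) (hμ0 : ∀ i, 0 ≤ μ i) (hμ : ∑ i, μ i = 1)
    {x : ι → ℝ} {B : ℝ} (hB : 0 ≤ B) (hxμ : ∀ i, x i * μ i ≤ B) :
    ∑ i, x i * inertiaStationary c μ i ≤ Fintype.card ι * B := by
  have hxμμ : ∑ i, x i * μ i ^ 2 ≤ B := calc
    ∑ i, x i * μ i ^ 2 = ∑ i, (x i * μ i) * μ i := by simp only [sq, mul_assoc]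
    _ ≤ ∑ i, B * μ i := sum_le_sum fun i _ => mul_le_mul_of_nonneg_right (hxμ i) (hμ0 i)
    _ = B := by rw [← mul_sum, hμ, mul_one]
  have hxμ' : ∑ i, x i * μ i ≤ Fintype.card ι * B := by
    simpa using sum_le_sum fun i (_ : i ∈ univ) => hxμ i
  have hnum : ∑ i, x i * ((1 + c * μ i) * μ i) = ∑ i, x i * μ i + c * ∑ i, x i * μ i ^ 2 := by
    simp only [mul_add, add_mul, one_mul, sum_add_distrib, mul_sum, sq]
    congr 1; exact sum_congr rfl fun i _ => by ring
  simp only [inertiaStationary, mul_div_assoc', ← sum_div]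
  rw [div_le_iff₀ (inertia_weight_sum_pos hc hμ), hnum, sum_inertia_weight hμ]
  calc ∑ i, x i * μ i + c * ∑ i, x i * μ i ^ 2 ≤ Fintype.card ι * B + c * B :=
        add_le_add hxμ' (mul_le_mul_of_nonneg_left hxμμ hc)
    _ ≤ Fintype.card ι * B + c * B * (Fintype.card ι * ∑ i, μ i ^ 2) :=
        add_le_add_right (le_mul_of_one_le_right (mul_nonneg hc hB)
          (one_le_card_mul_sum_sq hμ)) _
    _ = Fintype.card ι * B * (1 + c * ∑ i, μ i ^ 2) := by ring

end inertia

lemma sum_mul_inertiaStationary_logit_le {β : ℝ} (hβ : 0 < β) {u : ι → ℝ} {i₀ : ι}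
    (h₀ : u i₀ = 0) {c : ℝ} (hc : 0 ≤ c) {θ : ι → ℝ} {M : ℝ} (hθ : ∀ i, θ i + u i ≤ M) :
    ∑ i, θ i * inertiaStationary c (logit β u) i ≤ M + Fintype.card ι / (β * exp 1) := by
  have : Nonempty ι := ⟨i₀⟩
  have hμ := sum_logit β u
  have hμbar0 := inertiaStationary_nonneg hc (logit_nonneg β u) hμ
  have hx : ∑ i, max (-u i) 0 * inertiaStationary c (logit β u) i
      ≤ Fintype.card ι * (1 / (β * exp 1)) :=
    sum_mul_inertiaStationary_le hc (logit_nonneg β u) hμ (by positivity)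
      (max_neg_zero_mul_logit_le hβ h₀)
  calc ∑ i, θ i * inertiaStationary c (logit β u) i
      ≤ ∑ i, (M + max (-u i) 0) * inertiaStationary c (logit β u) i :=
        sum_le_sum fun i _ => mul_le_mul_of_nonneg_right
          (by linarith [hθ i, le_max_left (-u i) 0]) (hμbar0 i)
    _ = M + ∑ i, max (-u i) 0 * inertiaStationary c (logit β u) i := by
        simp only [add_mul, sum_add_distrib, ← mul_sum, sum_inertiaStationary hc hμ, mul_one]
    _ ≤ M + Fintype.card ι / (β * exp 1) := by rw [mul_one_div] at hx; linarith

lemma sum_mul_le_of_mem_stdSimplex {ρ f : ι → ℝ} (hρ : ρ ∈ stdSimplex ℝ ι) {b : ℝ}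
    (hf : ∀ i, f i ≤ b) : ∑ i, ρ i * f i ≤ b :=
  calc ∑ i, ρ i * f i ≤ ∑ i, ρ i * b :=
        sum_le_sum fun i _ => mul_le_mul_of_nonneg_left (hf i) (hρ.1 i)
    _ = b := by rw [← sum_mul, hρ.2, one_mul]

end

theorem steady_state_gain_bounded_general
    (K Nm : ℕ)
    (β : ℝ) (hβ : 0 < β)
    (ρ : Fin K → ℝ) (hρ : ρ ∈ stdSimplex ℝ (Fin K))
    (R E C : Fin K → Fin Nm → ℝ)
    (γ : Fin K → ℝ) (hγ : ∀ k, 0 < γ k)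
    (U θ : Fin K → (Fin Nm → ℝ) → (Fin Nm ⊕ Unit) → ℝ)
    (hU : ∀ k a, U k a = Sum.elim (fun n => R k n - E k n * a n) fun _ => 0)
    (hθ : ∀ k a, θ k a = Sum.elim (fun n => E k n * a n - C k n) fun _ => 0)
    (μL η μbar : Fin K → (Fin Nm → ℝ) → (Fin Nm ⊕ Unit) → ℝ)
    (hμL : ∀ k a n, μL k a n = Real.exp (β * U k a n) / ∑ l, Real.exp (β * U k a l))
    (hη : ∀ k a n, η k a n = 1 + (Real.exp (β * γ k) - 1) * μL k a n)
    (hμbar : ∀ k a n, μbar k a n = η k a n * μL k a n / ∑ l, η k a l * μL k a l)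
    (gbar : ℝ)
    (hgbar : gbar = ⨆ a : Fin Nm → ℝ, ∑ k, ρ k * ∑ n, θ k a n * μbar k a n) :
    gbar ≤ (⨆ k : Fin K, ⨆ n : Fin Nm ⊕ Unit,
        (Sum.elim (R k) (fun _ => (0 : ℝ)) n - Sum.elim (C k) (fun _ => (0 : ℝ)) n))
      + ((Nm : ℝ) + 1) / (β * Real.exp 1) := by
  rw [hgbar]
  refine ciSup_le fun a => sum_mul_le_of_mem_stdSimplex hρ fun k => ?_
  have hμbar_eq : μbar k a = inertiaStationary (exp (β * γ k) - 1) (logit β (U k a)) := by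
    funext n
    simp only [hμbar, hη, hμL, inertiaStationary, logit]
  have hc : 0 ≤ exp (β * γ k) - 1 := sub_nonneg.2 (one_le_exp (mul_pos hβ (hγ k)).le)
  have hcard : (Fintype.card (Fin Nm ⊕ Unit) : ℝ) = Nm + 1 := by simp
  rw [hμbar_eq, ← hcard]
  refine sum_mul_inertiaStationary_logit_le hβ (i₀ := Sum.inr ()) (by simp [hU]) hc fun n => ?_
  calc θ k a n + U k a n
      = Sum.elim (R k) (fun _ => (0 : ℝ)) n - Sum.elim (C k) (fun _ => (0 : ℝ)) n := by
        rw [hθ, hU]; cases n <;> simp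
    _ ≤ _ := le_ciSup_of_le (Set.finite_range _).bddAbove k
        (le_ciSup (f := fun n : Fin Nm ⊕ Unit =>
          Sum.elim (R k) (fun _ => (0 : ℝ)) n - Sum.elim (C k) (fun _ => (0 : ℝ)) n)
          (Set.finite_range _).bddAbove n)

/-- Proposition 6 of the paper: boundedness of the optimal
steady-state gain. In the electricity pricing model with `Nm = N - 1 ≥ 1`
offers (indexed by `Fin Nm`) plus an outside option (the `Unit` summand),
logit intensity `β > 0` and uniform positive switching costs `γ^k`, the
optimal steady-state gain over unbounded prices satisfies
`ḡ ≤ max_{k,n}(R^{kn} - C^{kn}) + N/(β e)`, a bound independent of the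
switching costs (with the convention `R^{kN} = C^{kN} = 0` for the outside
option). -/
theorem steady_state_gain_bounded
    (K Nm : ℕ) (hK : 1 ≤ K) (hNm : 1 ≤ Nm)
    (β : ℝ) (hβ : 0 < β)
    (ρ : Fin K → ℝ) (hρ : ρ ∈ stdSimplex ℝ (Fin K))
    (R E C : Fin K → Fin Nm → ℝ) (hE : ∀ k n, 0 < E k n)
    (γ : Fin K → ℝ) (hγ : ∀ k, 0 < γ k)
    (U θ : Fin K → (Fin Nm → ℝ) → (Fin Nm ⊕ Unit) → ℝ)
    (hU : ∀ k a, U k a = Sum.elim (fun n => R k n - E k n * a n) fun _ => 0)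
    (hθ : ∀ k a, θ k a = Sum.elim (fun n => E k n * a n - C k n) fun _ => 0)
    (μL η μbar : Fin K → (Fin Nm → ℝ) → (Fin Nm ⊕ Unit) → ℝ)
    (hμL : ∀ k a n, μL k a n = Real.exp (β * U k a n) / ∑ l, Real.exp (β * U k a l))
    (hη : ∀ k a n, η k a n = 1 + (Real.exp (β * γ k) - 1) * μL k a n)
    (hμbar : ∀ k a n, μbar k a n = η k a n * μL k a n / ∑ l, η k a l * μL k a l)
    (gbar : ℝ)
    (hgbar : gbar = ⨆ a : Fin Nm → ℝ, ∑ k, ρ k * ∑ n, θ k a n * μbar k a n) :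
    gbar ≤ (⨆ k : Fin K, ⨆ n : Fin Nm ⊕ Unit,
        (Sum.elim (R k) (fun _ => (0 : ℝ)) n - Sum.elim (C k) (fun _ => (0 : ℝ)) n))
      + ((Nm : ℝ) + 1) / (β * Real.exp 1) :=
  steady_state_gain_bounded_general K Nm β hβ ρ hρ R E C γ hγ U θ hU hθ μL η μbar hμL hη hμbar gbar
    hgbar
end

section
/- One-dimensional transition inversion: fix β > 0 and γ > 0, and set γ̂ = e^{βγ} > 1. Let μ_prev ∈ [0,1] and μ ∈ (0,1), and set κ = 1 + (γ̂² − 1)(μ_prev − μ). Then there is a unique x > 0 such that μ = [γ̂x/(1+γ̂x) − x/(γ̂+x)]·μ_prev + x/(γ̂+x), and it is given by x = ( 2μ − κ + √( (2μ−κ)² + 4γ̂²μ(1−μ) ) ) / ( 2γ̂(1−μ) ). Consequently, writing x = e^{−β(a−R)}, there is a unique price a ∈ ℝ achieving the transition from state μ_prev to state μ. -/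
/-!
Clearing the positive denominators `(1 + γ̂x)(γ̂ + x)` turns the transition equation into the
quadratic `γ̂(1 - μ)x² = (2μ - κ)x + γ̂μ`, whose roots have product `-μ/(1 - μ) < 0`, so exactly
one of them is positive. Since `a ↦ e^{-β(a - R)}` is a bijection onto `(0, ∞)`, the price is
unique as well.
-/

open Real

lemma eq_pos_quadratic_root_iff {a b c x : ℝ} (ha : 0 < a) (hc : 0 < c) :
    (0 < x ∧ a * x ^ 2 = b * x + c) ↔ x = (b + √(b ^ 2 + 4 * a * c)) / (2 * a) := by
  set s := √(b ^ 2 + 4 * a * c)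
  have hdiscrim : discrim a (-b) (-c) = s * s := by
    rw [discrim, Real.mul_self_sqrt (by positivity)]
    ring
  -- `4ac > 0` puts `√(b² + 4ac)` strictly above `|b|`, so exactly one root is positive.
  have hb : |b| < s := by
    rw [Real.lt_sqrt (abs_nonneg b), sq_abs]
    nlinarith
  have hroots := quadratic_eq_zero_iff ha.ne' hdiscrim x
  rw [neg_neg] at hroots
  constructor
  · rintro ⟨hx, hquad⟩
    refine (hroots.1 (by linear_combination hquad)).resolve_right fun hneg => ?_
    have : (b - s) / (2 * a) < 0 :=
      div_neg_of_neg_of_pos (by linarith [le_abs_self b]) (by positivity)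
    linarith
  · rintro rfl
    refine ⟨div_pos (by linarith [neg_abs_le b]) (by positivity), ?_⟩
    linear_combination hroots.2 (Or.inl rfl)

lemma transition_eq_iff_quadratic {g p μ x : ℝ} (hg : 0 < g) (hx : 0 < x) :
    μ = (g * x / (1 + g * x) - x / (g + x)) * p + x / (g + x) ↔
      g * (1 - μ) * x ^ 2 = (2 * μ - (1 + (g ^ 2 - 1) * (p - μ))) * x + g * μ := by
  have hden : (1 + g * x) * (g + x) ≠ 0 := by positivity
  have hdiff : μ - ((g * x / (1 + g * x) - x / (g + x)) * p + x / (g + x)) =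
      -(g * (1 - μ) * x ^ 2 - ((2 * μ - (1 + (g ^ 2 - 1) * (p - μ))) * x + g * μ)) /
        ((1 + g * x) * (g + x)) := by
    field_simp
    ring
  rw [← sub_eq_zero, hdiff, div_eq_zero_iff, or_iff_left hden, neg_eq_zero, sub_eq_zero]

lemma exp_neg_mul_sub_eq_iff {β R a x : ℝ} (hβ : β ≠ 0) (hx : 0 < x) :
    exp (-(β * (a - R))) = x ↔ a = R - log x / β := by
  rw [← Real.exp_log hx, Real.exp_eq_exp, Real.exp_log hx, eq_sub_iff_add_eq,
    ← eq_sub_iff_add_eq', div_eq_iff hβ]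
  constructor <;> intro h <;> linarith

theorem transition_inversion_general
    (β γ : ℝ) (hβ : 0 < β)
    (γhat : ℝ) (hγhat : γhat = Real.exp (β * γ))
    (μprev μ : ℝ) (hμ : μ ∈ Set.Ioo (0 : ℝ) 1)
    (κ : ℝ) (hκ : κ = 1 + (γhat ^ 2 - 1) * (μprev - μ))
    (x0 : ℝ)
    (hx0 : x0 = (2 * μ - κ + Real.sqrt ((2 * μ - κ) ^ 2 + 4 * γhat ^ 2 * μ * (1 - μ))) /
      (2 * γhat * (1 - μ))) :
    (∀ x : ℝ,
      (0 < x ∧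
        μ = (γhat * x / (1 + γhat * x) - x / (γhat + x)) * μprev + x / (γhat + x)) ↔
      x = x0) ∧
    ∀ R : ℝ, ∃! a : ℝ,
      μ = (γhat * Real.exp (-(β * (a - R))) / (1 + γhat * Real.exp (-(β * (a - R))))
            - Real.exp (-(β * (a - R))) / (γhat + Real.exp (-(β * (a - R))))) * μprev
          + Real.exp (-(β * (a - R))) / (γhat + Real.exp (-(β * (a - R)))) := by
  obtain ⟨hμ0, hμ1⟩ := hμ
  have hγhat_pos : 0 < γhat := hγhat ▸ Real.exp_pos _
  have hlead : 0 < γhat * (1 - μ) := mul_pos hγhat_pos (sub_pos.2 hμ1)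
  have hx0_root : x0 = (2 * μ - κ + √((2 * μ - κ) ^ 2 + 4 * (γhat * (1 - μ)) * (γhat * μ))) /
      (2 * (γhat * (1 - μ))) := by
    rw [hx0]
    ring_nf
  have hroot : ∀ x : ℝ, (0 < x ∧
      μ = (γhat * x / (1 + γhat * x) - x / (γhat + x)) * μprev + x / (γhat + x)) ↔ x = x0 := by
    intro x
    rw [hx0_root, ← eq_pos_quadratic_root_iff hlead (by positivity), hκ]
    exact and_congr_right fun hx => transition_eq_iff_quadratic hγhat_pos hx
  have hx0_pos : 0 < x0 := ((hroot x0).2 rfl).1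
  refine ⟨hroot, fun R => (existsUnique_congr fun a => ?_).2 (existsUnique_eq (a' := R - log x0 / β))⟩
  rw [← exp_neg_mul_sub_eq_iff hβ.ne' hx0_pos, ← hroot]
  exact (and_iff_right (Real.exp_pos _)).symm

/-- Proposition 8 of the paper: one-dimensional transition
inversion. Given `μ_prev ∈ [0,1]` and `μ ∈ (0,1)`, the unique `x > 0` such
that one step of the two-state logit-with-inertia kernel maps `μ_prev` to `μ`
is given by the explicit quadratic-root formula; consequently, writing
`x = e^{-β(a - R)}`, there is a unique price `a` achieving this transition. -/
theorem transition_inversion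
    (β γ : ℝ) (hβ : 0 < β) (hγ : 0 < γ)
    (γhat : ℝ) (hγhat : γhat = Real.exp (β * γ))
    (μprev μ : ℝ) (hμprev : μprev ∈ Set.Icc (0 : ℝ) 1) (hμ : μ ∈ Set.Ioo (0 : ℝ) 1)
    (κ : ℝ) (hκ : κ = 1 + (γhat ^ 2 - 1) * (μprev - μ))
    (x0 : ℝ)
    (hx0 : x0 = (2 * μ - κ + Real.sqrt ((2 * μ - κ) ^ 2 + 4 * γhat ^ 2 * μ * (1 - μ))) /
      (2 * γhat * (1 - μ))) :
    (∀ x : ℝ,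
      (0 < x ∧
        μ = (γhat * x / (1 + γhat * x) - x / (γhat + x)) * μprev + x / (γhat + x)) ↔
      x = x0) ∧
    ∀ R : ℝ, ∃! a : ℝ,
      μ = (γhat * Real.exp (-(β * (a - R))) / (1 + γhat * Real.exp (-(β * (a - R))))
            - Real.exp (-(β * (a - R))) / (γhat + Real.exp (-(β * (a - R))))) * μprev
          + Real.exp (-(β * (a - R))) / (γhat + Real.exp (-(β * (a - R)))) :=
  transition_inversion_general β γ hβ γhat hγhat μprev μ hμ κ hκ x0 hx0
end

section
/- Divergence of cyclic gains with growing inertia: in the one-offer model, fix β > 0, R ∈ ℝ, C ∈ ℝ, reals 0 < s < S < 1 and an integer τ ≥ 2. Consider the (s,S,τ)-cycle defined by μ_t = S + (s−S)·t/τ for t = 0,1,…,τ−1 and μ_τ = μ_0 = S. For γ > 0 and γ̂ = e^{βγ}, let a_t(γ) = R − (1/β)·log x_t(γ), where x_t(γ) > 0 is the unique positive solution of μ_t = [γ̂x/(1+γ̂x)]·μ_{t−1} + [x/(γ̂+x)]·(1−μ_{t−1}), and let g[l](γ) = (1/τ)·Σ_{t=1}^τ (a_t(γ) − C)·μ_t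 be the mean profit over the cycle. Then there exist constants c ∈ ℝ and Γ_0 > 0 such that for all γ ≥ Γ_0: g[l](γ) ≥ ((τ−1)·s − S)·γ/τ − c. In particular, if (τ−1)·s > S then g[l](γ) → +∞ as γ → ∞, so (since the optimal steady-state gain is bounded independently of γ) there is a threshold Γ such that for all γ ≥ Γ the cyclic policy strictly outperforms every constant-price (steady-state) policy. -/
/-!
Write `E = exp (β γ)` and `x = exp (-β (a - R))`. When the state drops by `D = (S - s) / τ`, the
staying customers alone give `E x D ≤ μ_t ≤ S`, so the price is at least `R + γ - O(1)`; at the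
promotion step the switching customers alone give `x / (E + x) ≤ S`, so the price is at least
`R - γ - O(1)`. Summing over the cycle gives a gain `≥ ((τ - 1) s - S) γ / τ - c`. For a constant
price keeping the state at `m`, the fixed-point equation forces `x ≥ m / 2` for every `E ≥ 1`, so
steady-state profits stay below `|R - C| + (log 2 + 1) / β`.
-/

open Filter Real Finset

-- `E` stands for `γ̂ = exp (β γ)`.
noncomputable def inertiaStep (E x μ : ℝ) : ℝ :=
  E * x / (1 + E * x) * μ + x / (E + x) * (1 - μ)

section InertiaStep

variable {E x μ μ' : ℝ}

theorem le_div_of_inertiaStep_eq_of_lt (hE : 0 < E) (hx : 0 < x) (hμ : μ ≤ 1)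
    (h : inertiaStep E x μ = μ') (hlt : μ' < μ) : x ≤ μ' / (E * (μ - μ')) := by
  have hstay : E * x / (1 + E * x) * μ ≤ μ' := by
    rw [← h, inertiaStep, le_add_iff_nonneg_right]
    exact mul_nonneg (by positivity) (by linarith)
  rw [div_mul_eq_mul_div, div_le_iff₀ (by positivity)] at hstay
  rw [le_div_iff₀ (by nlinarith)]
  nlinarith

theorem le_mul_of_inertiaStep_eq_of_lt_one (hE : 1 ≤ E) (hx : 0 < x) (hμ : 0 ≤ μ)
    (h : inertiaStep E x μ = μ') (hlt : μ' < 1) :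
    x ≤ E * (μ' / (1 - μ')) := by
  -- with inertia `E ≥ 1`, the staying probability dominates the switching one
  have hswitch : x / (E + x) ≤ E * x / (1 + E * x) := by
    rw [div_le_div_iff₀ (by positivity) (by positivity)]
    nlinarith [mul_nonneg hx.le (by nlinarith : (0:ℝ) ≤ E * E - 1)]
  have hlow : x / (E + x) ≤ μ' := by
    rw [← h, inertiaStep]
    nlinarith [mul_le_mul_of_nonneg_right hswitch hμ]
  rw [div_le_iff₀ (by positivity)] at hlow
  rw [mul_div_assoc', le_div_iff₀ (by linarith)]
  nlinarith

end InertiaStep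

theorem sub_sub_log_div_le_of_le_mul_exp {β γ K x : ℝ} (R : ℝ) (hβ : 0 < β) (hx : 0 < x)
    (h : x ≤ K * exp (β * γ)) : R - γ - log K / β ≤ R - 1 / β * log x := by
  have hK : 0 < K := pos_of_mul_pos_left (hx.trans_le h) (exp_pos _).le
  have hlog : log x ≤ log K + β * γ := by
    simpa [log_mul hK.ne' (exp_pos _).ne'] using log_le_log hx h
  have hsplit : (log K + β * γ) / β = log K / β + γ := by field_simp
  rw [one_div_mul_eq_div]
  linarith [div_le_div_of_nonneg_right hlog hβ.le]

section Price

variable {β γ x μ μ' : ℝ} (R : ℝ)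

theorem le_price_of_inertiaStep_eq_of_lt (hβ : 0 < β) (hx : 0 < x) (hμ : μ ≤ 1)
    (h : inertiaStep (exp (β * γ)) x μ = μ') (hlt : μ' < μ) :
    R + γ - log (μ' / (μ - μ')) / β ≤ R - 1 / β * log x := by
  have hbound := le_div_of_inertiaStep_eq_of_lt (exp_pos _) hx hμ h hlt
  rw [mul_comm, ← div_div, div_eq_mul_inv, ← exp_neg, ← mul_neg] at hbound
  simpa using sub_sub_log_div_le_of_le_mul_exp R hβ hx hbound

theorem le_price_of_inertiaStep_eq_of_lt_one (hβ : 0 < β) (hγ : 0 ≤ γ) (hx : 0 < x)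
    (hμ : 0 ≤ μ) (h : inertiaStep (exp (β * γ)) x μ = μ') (hlt : μ' < 1) :
    R - γ - log (μ' / (1 - μ')) / β ≤ R - 1 / β * log x := by
  have hbound := le_mul_of_inertiaStep_eq_of_lt_one (one_le_exp (by positivity)) hx hμ h hlt
  exact sub_sub_log_div_le_of_le_mul_exp R hβ hx (by rwa [mul_comm] at hbound)

end Price

section Cycle

variable {s S : ℝ} {τ : ℕ} {μ : ℕ → ℝ}

theorem cycle_mem_Icc (hμ : ∀ t < τ, μ t = S + (s - S) * t / τ) (hsS : s ≤ S) {t : ℕ}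
    (ht : t < τ) : μ t ∈ Set.Icc s S := by
  have htτ : (t : ℝ) + 1 ≤ τ := by exact_mod_cast ht
  have hτ : (0 : ℝ) < τ := by linarith [(t.cast_nonneg : (0 : ℝ) ≤ t)]
  rw [hμ t ht, Set.mem_Icc, mul_div_assoc]
  constructor
  · nlinarith [(div_le_one hτ).2 (by linarith : (t : ℝ) ≤ τ)]
  · nlinarith [div_nonneg t.cast_nonneg hτ.le]

theorem cycle_sub_succ (hμ : ∀ t < τ, μ t = S + (s - S) * t / τ) {t : ℕ} (ht : t + 1 < τ) :
    μ t - μ (t + 1) = (S - s) / τ := by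
  rw [hμ t (by omega), hμ (t + 1) ht]
  push_cast
  ring

end Cycle

theorem sub_abs_le_mul_of_add_le {a b c m : ℝ} (h : b + c ≤ a) (hm0 : 0 ≤ m) (hm1 : m ≤ 1) :
    b * m - |c| ≤ a * m := by
  nlinarith [neg_abs_le c, abs_nonneg c]

theorem le_sum_Icc_one_add_one {f : ℕ → ℝ} {n : ℕ} {A B : ℝ}
    (hf : ∀ t ∈ Finset.Icc 1 n, A ≤ f t) (hlast : B ≤ f (n + 1)) :
    n * A + B ≤ ∑ t ∈ Finset.Icc 1 (n + 1), f t := by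
  rw [sum_Icc_succ_top (by omega)]
  have hbulk := card_nsmul_le_sum _ _ _ hf
  rw [Nat.card_Icc, Nat.add_sub_cancel, nsmul_eq_mul] at hbulk
  linarith

theorem cycle_gain_lower_bound {β R C s S : ℝ} (hβ : 0 < β) (hs : 0 < s) (hsS : s < S)
    (hS1 : S < 1) {τ : ℕ} (hτ : 1 ≤ τ) {μ : ℕ → ℝ}
    (hμ : ∀ t < τ, μ t = S + (s - S) * t / τ) (hμτ : μ τ = S) {x : ℝ → ℕ → ℝ}
    (hx : ∀ γ : ℝ, 0 < γ → ∀ t : ℕ, 1 ≤ t → t ≤ τ →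
      0 < x γ t ∧ μ t = inertiaStep (exp (β * γ)) (x γ t) (μ (t - 1))) :
    ∃ c : ℝ, ∀ γ : ℝ, 0 < γ → (((τ : ℝ) - 1) * s - S) * γ / τ - c ≤
      1 / (τ : ℝ) * ∑ t ∈ Finset.Icc 1 τ, (R - 1 / β * log (x γ t) - C) * μ t := by
  obtain ⟨n, rfl⟩ : ∃ n, τ = n + 1 := ⟨τ - 1, by omega⟩
  set D := (S - s) / (n + 1 : ℕ)
  have hD : 0 < D := div_pos (by linarith) (by positivity)
  set c₁ := R - C - log (S / D) / β
  set c₂ := R - C - log (S / (1 - S)) / β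
  refine ⟨(n * |c₁| + |c₂|) / (n + 1 : ℕ), fun γ hγ => ?_⟩
  have hdecrease : ∀ t ∈ Finset.Icc 1 n,
      γ * s - |c₁| ≤ (R - 1 / β * log (x γ t) - C) * μ t := by
    intro t ht
    obtain ⟨k, rfl⟩ : ∃ k, t = k + 1 := ⟨t - 1, by grind⟩
    have hk : k + 1 < n + 1 := by grind
    obtain ⟨hxpos, hstep⟩ := hx γ hγ (k + 1) (by omega) hk.le
    rw [Nat.add_sub_cancel] at hstep
    obtain ⟨hs_le, hle_S⟩ := cycle_mem_Icc hμ hsS.le hk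
    have hprev := cycle_mem_Icc hμ hsS.le (k.lt_succ_self.trans hk)
    have hdiff : μ k - μ (k + 1) = D := cycle_sub_succ hμ hk
    have hprice := le_price_of_inertiaStep_eq_of_lt R hβ hxpos (by linarith [hprev.2])
      hstep.symm (by linarith)
    rw [hdiff] at hprice
    have hlog : log (μ (k + 1) / D) ≤ log (S / D) :=
      log_le_log (div_pos (by linarith) hD) (by gcongr)
    have hterm : γ + c₁ ≤ R - 1 / β * log (x γ (k + 1)) - C := by
      linarith [div_le_div_of_nonneg_right hlog hβ.le]
    calc γ * s - |c₁| ≤ γ * μ (k + 1) - |c₁| := by gcongr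
      _ ≤ _ := sub_abs_le_mul_of_add_le hterm (by linarith) (by linarith)
  have hpromote : -γ * S - |c₂| ≤ (R - 1 / β * log (x γ (n + 1)) - C) * μ (n + 1) := by
    obtain ⟨hxpos, hstep⟩ := hx γ hγ (n + 1) (by omega) le_rfl
    rw [Nat.add_sub_cancel, hμτ] at hstep
    have hprice := le_price_of_inertiaStep_eq_of_lt_one R hβ hγ.le hxpos
      (by linarith [(cycle_mem_Icc hμ hsS.le n.lt_succ_self).1]) hstep.symm hS1
    rw [hμτ]
    exact sub_abs_le_mul_of_add_le (by linarith) (by linarith) hS1.le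
  have hsum := le_sum_Icc_one_add_one hdecrease hpromote
  have hτ : (0 : ℝ) < (n + 1 : ℕ) := by positivity
  calc _ = 1 / ((n + 1 : ℕ) : ℝ) * (n * (γ * s - |c₁|) + (-γ * S - |c₂|)) := by
        field_simp
        push_cast
        ring
    _ ≤ _ := by gcongr

-- The `x` of the constant price that keeps the state at `m`: the positive root of
-- `E (1 - m) x² + (1 - 2m) x = m E`.
noncomputable def steadyRoot (E m : ℝ) : ℝ :=
  (2 * m - 1 + sqrt ((2 * m - 1) ^ 2 + 4 * E ^ 2 * m * (1 - m))) / (2 * E * (1 - m))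

section Steady

variable {E m : ℝ}

theorem steadyRoot_pos_and_inertiaStep_eq (hE : 0 < E) (hm0 : 0 < m) (hm1 : m < 1) :
    0 < steadyRoot E m ∧ inertiaStep E (steadyRoot E m) m = m := by
  set r := sqrt ((2 * m - 1) ^ 2 + 4 * E ^ 2 * m * (1 - m))
  have hm : 0 < 1 - m := by linarith
  have hprod : 0 < 4 * E ^ 2 * m * (1 - m) := by positivity
  have hr2 : r ^ 2 = (2 * m - 1) ^ 2 + 4 * E ^ 2 * m * (1 - m) := sq_sqrt (by positivity)
  have hr : |2 * m - 1| < r := by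
    rw [← sqrt_sq_eq_abs]
    exact sqrt_lt_sqrt (sq_nonneg _) (by linarith)
  have hnum : 0 < 2 * m - 1 + r := by linarith [neg_abs_le (2 * m - 1)]
  have hpos : 0 < steadyRoot E m := div_pos hnum (by nlinarith)
  refine ⟨hpos, ?_⟩
  have hquad : E * (1 - m) * steadyRoot E m ^ 2 + (1 - 2 * m) * steadyRoot E m = m * E := by
    rw [show steadyRoot E m = (2 * m - 1 + r) / (2 * E * (1 - m)) from rfl]
    field_simp
    linear_combination hr2
  unfold inertiaStep
  field_simp
  linear_combination hquad

theorem half_le_of_inertiaStep_eq_self {x : ℝ} (hE : 1 ≤ E) (hx : 0 < x) (hm0 : 0 < m)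
    (hm1 : m ≤ 1) (h : inertiaStep E x m = m) : m / 2 ≤ x := by
  have hfix : m * (E + x) = x * (1 - m) * (1 + E * x) := by
    unfold inertiaStep at h
    field_simp at h
    linear_combination -h
  by_contra! hlt
  have hsq : E * x ^ 2 ≤ E * (m / 2) ^ 2 := by gcongr
  nlinarith [mul_nonneg (mul_nonneg hx.le hm0.le) (by positivity : (0 : ℝ) ≤ 1 + E * x),
    mul_nonneg hm0.le hx.le, mul_le_mul_of_nonneg_left hm1 (by positivity : (0 : ℝ) ≤ E * m)]

end Steady

theorem steady_profit_le {β E R C m : ℝ} (hβ : 0 < β) (hE : 1 ≤ E) (hm0 : 0 < m) (hm1 : m < 1) :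
    (R - 1 / β * log (steadyRoot E m) - C) * m ≤ |R - C| + (log 2 + 1) / β := by
  obtain ⟨hpos, hfix⟩ := steadyRoot_pos_and_inertiaStep_eq (E := E) (by linarith) hm0 hm1
  have hlog : log m - log 2 ≤ log (steadyRoot E m) := by
    rw [← log_div hm0.ne' two_ne_zero]
    exact log_le_log (by positivity) (half_le_of_inertiaStep_eq_self hE hpos hm0 hm1.le hfix)
  have hent : -(m * log m) ≤ 1 := by linarith [self_sub_one_le_mul_log hm0.le]
  have hRC : (R - C) * m ≤ |R - C| := by
    nlinarith [le_abs_self (R - C), abs_nonneg (R - C)]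
  have hlog2 : m * log 2 ≤ log 2 := by nlinarith [log_pos one_lt_two]
  calc (R - 1 / β * log (steadyRoot E m) - C) * m
      = (R - C) * m - m * log (steadyRoot E m) / β := by ring
    _ ≤ (R - C) * m - m * (log m - log 2) / β := by gcongr
    _ ≤ |R - C| + (log 2 + 1) / β := by
      rw [sub_eq_add_neg, ← neg_div]
      gcongr
      linarith

theorem sSup_steady_profit_le {β γ : ℝ} (R C : ℝ) (hβ : 0 < β) (hγ : 0 ≤ γ) :
    sSup {y | ∃ m ∈ Set.Ioo (0 : ℝ) 1,
      y = (R - 1 / β * log (steadyRoot (exp (β * γ)) m) - C) * m} ≤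
      |R - C| + (log 2 + 1) / β := by
  refine Real.sSup_le ?_ (by positivity [log_pos one_lt_two])
  rintro y ⟨m, ⟨hm0, hm1⟩, rfl⟩
  exact steady_profit_le hβ (one_le_exp (by positivity)) hm0 hm1

/-- Proposition 10 of the paper: divergence of cyclic gains
with growing inertia. For the `(s,S,τ)`-cycle, the mean profit `g[l](γ)`
satisfies `g[l](γ) ≥ ((τ-1)s - S)γ/τ - c` for all large `γ`; hence if
`(τ-1)s > S` the cyclic gain diverges as `γ → ∞` and eventually strictly
outperforms the (bounded) optimal steady-state gain of constant-price
policies. -/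
theorem cyclic_gain_diverges_with_inertia
    (β R C s S : ℝ) (hβ : 0 < β) (hs : 0 < s) (hsS : s < S) (hS1 : S < 1)
    (τ : ℕ) (hτ : 2 ≤ τ)
    (μ : ℕ → ℝ)
    (hμ : ∀ t : ℕ, t < τ → μ t = S + (s - S) * t / τ) (hμτ : μ τ = S)
    (x : ℝ → ℕ → ℝ)
    (hx : ∀ γ : ℝ, 0 < γ → ∀ t : ℕ, 1 ≤ t → t ≤ τ →
      0 < x γ t ∧
      μ t = Real.exp (β * γ) * x γ t / (1 + Real.exp (β * γ) * x γ t) * μ (t - 1)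
        + x γ t / (Real.exp (β * γ) + x γ t) * (1 - μ (t - 1)))
    (g : ℝ → ℝ)
    (hg : ∀ γ, g γ = 1 / (τ : ℝ) *
      ∑ t ∈ Finset.Icc 1 τ, (R - 1 / β * Real.log (x γ t) - C) * μ t)
    (gbar : ℝ → ℝ)
    (hgbar : ∀ γ, gbar γ = sSup {y | ∃ m ∈ Set.Ioo (0 : ℝ) 1,
      y = (R - 1 / β * Real.log
          ((2 * m - 1 +
              Real.sqrt ((2 * m - 1) ^ 2 + 4 * Real.exp (β * γ) ^ 2 * m * (1 - m))) /
            (2 * Real.exp (β * γ) * (1 - m))) - C) * m}) :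
    (∃ c Γ0 : ℝ, 0 < Γ0 ∧ ∀ γ : ℝ, Γ0 ≤ γ →
      (((τ : ℝ) - 1) * s - S) * γ / (τ : ℝ) - c ≤ g γ) ∧
    (((τ : ℝ) - 1) * s > S →
      Tendsto g atTop atTop ∧ ∃ Γ : ℝ, ∀ γ : ℝ, Γ ≤ γ → gbar γ < g γ) := by
  obtain ⟨c, hc⟩ := cycle_gain_lower_bound (R := R) (C := C) hβ hs hsS hS1 (by omega) hμ hμτ hx
  have hlow : ∀ γ, 0 < γ → (((τ : ℝ) - 1) * s - S) * γ / τ - c ≤ g γ := fun γ hγ => by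
    rw [hg]
    exact hc γ hγ
  refine ⟨⟨c, 1, one_pos, fun γ hγ => hlow γ (by linarith)⟩, fun hgrowth => ?_⟩
  have hline : Tendsto (fun γ : ℝ => (((τ : ℝ) - 1) * s - S) * γ / τ - c) atTop atTop :=
    tendsto_atTop_add_const_right _ (-c)
      ((tendsto_id.const_mul_atTop (sub_pos.2 hgrowth)).atTop_div_const (by positivity))
  have hdiv : Tendsto g atTop atTop :=
    tendsto_atTop_mono' _ ((eventually_gt_atTop 0).mono hlow) hline
  obtain ⟨Γ, hΓ⟩ := eventually_atTop.1
    ((hdiv.eventually_gt_atTop (|R - C| + (log 2 + 1) / β)).and (eventually_ge_atTop 0))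
  refine ⟨hdiv, Γ, fun γ hγ => ?_⟩
  rw [hgbar]
  exact (sSup_steady_profit_le R C hβ (hΓ γ hγ).2).trans_lt (hΓ γ hγ).1
end
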